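/- arXiv:1204.2484 — 3 statements merged into one kernel-verified Lean document; each statement's English description precedes it below -/
import Mathlib

section
/- Let λ, μ, ν ∈ ℕⁿ be weakly decreasing with |ν| = |λ| + |μ|, let f ∈ B(λ,μ,ν), let d be an f-hive preserving flow class on G, and let φ be a weighted family of complete turnpaths in R_f satisfying in(L,a,φ) = in(L,a,d) and out(L,a,φ) = out(L,a,d) for every f-flatspace L and every side a of L. Then the nonnegative flow d' := Σ_p φ(p)·p on R_f satisfies δ(π(d')) = δ(d). -/
/-!
Framework for hive flows on the honeycomb graph, following
Bürgisser–Ikenmeyer, "A max-flow algorithm for positivity of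
Littlewood-Richardson coefficients".

Vertices of the triangular graph `Δ` with parameter `n` are the points
`x(m,i)` with `0 ≤ i ≤ m ≤ n` (`m` = row counted from the top, `i` =
position in the row counted from the left).
-/

namespace LRFlows

/-- Edges of the triangular graph `Δ`:
* `dl m i` is the down-left slanted edge from `x(m,i)` to `x(m+1,i)`,
* `dr m i` is the down-right slanted edge from `x(m,i)` to `x(m+1,i+1)`,
* `hz m i` is the horizontal edge from `x(m,i)` to `x(m,i+1)`. -/
inductive EdgeK : Type
  | dl (m i : ℕ)
  | dr (m i : ℕ)
  | hz (m i : ℕ)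
  deriving DecidableEq

namespace EdgeK

def valid (n : ℕ) : EdgeK → Prop
  | dl m i => i ≤ m ∧ m + 1 ≤ n
  | dr m i => i ≤ m ∧ m + 1 ≤ n
  | hz m i => i + 1 ≤ m ∧ m ≤ n

end EdgeK

/-- Hive triangles: `up m i` is the upright triangle with vertices
`x(m,i), x(m+1,i), x(m+1,i+1)`; `down m i` is the downright triangle with
vertices `x(m,i), x(m,i+1), x(m+1,i+1)`. -/
inductive Tri : Type
  | up (m i : ℕ)
  | down (m i : ℕ)
  deriving DecidableEq

namespace Tri

def valid (n : ℕ) : Tri → Prop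
  | up m i => i ≤ m ∧ m + 1 ≤ n
  | down m i => i + 1 ≤ m ∧ m + 1 ≤ n

/-- The three sides of a hive triangle, listed in clockwise order. -/
def sides : Tri → List EdgeK
  | up m i => [.dr m i, .hz (m+1) i, .dl m i]
  | down m i => [.hz m i, .dl m (i+1), .dr m i]

end Tri

/-- `e` is a side of the hive triangle `T`. -/
def sideOf (e : EdgeK) (T : Tri) : Prop := e ∈ T.sides

/-- The side following a given side of a hive triangle in clockwise order
around the triangle. -/
def cwNext : Tri → EdgeK → EdgeK
  | .up m i, e =>
      if e = .dr m i then .hz (m+1) i else if e = .hz (m+1) i then .dl m i else .dr m i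
  | .down m i, e =>
      if e = .hz m i then .dl m (i+1) else if e = .dl m (i+1) then .dr m i else .hz m i

/-- The edges on the right border of `Δ`. -/
def onRight (n : ℕ) (e : EdgeK) : Prop := ∃ m, m + 1 ≤ n ∧ e = .dr m m
/-- The edges on the bottom border of `Δ`. -/
def onBottom (n : ℕ) (e : EdgeK) : Prop := ∃ i, i + 1 ≤ n ∧ e = .hz n i
/-- The edges on the left border of `Δ`. -/
def onLeft (n : ℕ) (e : EdgeK) : Prop := ∃ m, m + 1 ≤ n ∧ e = .dl m 0

/-- The unique upright hive triangle having `e` as a side. -/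
def upOf : EdgeK → Tri
  | .dl m i => .up m i
  | .dr m i => .up m i
  | .hz m i => .up (m - 1) i

/-- The downright hive triangle having `e` as a side, if any. -/
def dnOf? : EdgeK → Option Tri
  | .dl m i => if i = 0 then none else some (.down m (i - 1))
  | .dr m i => some (.down m i)
  | .hz m i => some (.down m i)

/-- A flow class on the honeycomb graph `G`, recorded by its throughput
function `E(Δ) → ℝ`:  `thru k` is the net flow through the white vertex on
the edge `k` into the adjacent upright hive triangle. -/
structure Flow : Type where
  dl : ℕ → ℕ → ℝ
  dr : ℕ → ℕ → ℝ
  hz : ℕ → ℕ → ℝ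

namespace Flow

def thru (f : Flow) : EdgeK → ℝ
  | .dl m i => f.dl m i
  | .dr m i => f.dr m i
  | .hz m i => f.hz m i

end Flow

noncomputable instance : Add Flow :=
  ⟨fun f g => ⟨fun m i => f.dl m i + g.dl m i, fun m i => f.dr m i + g.dr m i,
    fun m i => f.hz m i + g.hz m i⟩⟩

noncomputable instance : SMul ℝ Flow :=
  ⟨fun c f => ⟨fun m i => c * f.dl m i, fun m i => c * f.dr m i, fun m i => c * f.hz m i⟩⟩

/-- A flow class is recorded by its values on the (valid) edges of `Δ` only;
we normalize all other values to `0`, so that flow classes correspond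
bijectively to normalized `Flow`s. -/
def Normalized (n : ℕ) (f : Flow) : Prop :=
  (∀ m i, ¬ (EdgeK.dl m i).valid n → f.dl m i = 0) ∧
  (∀ m i, ¬ (EdgeK.dr m i).valid n → f.dr m i = 0) ∧
  (∀ m i, ¬ (EdgeK.hz m i).valid n → f.hz m i = 0)

/-- Kirchhoff's conservation laws, in throughput form: the throughputs of the
three sides of every hive triangle (measured into the respective upright
triangle) sum to zero. -/
def IsFlow (n : ℕ) (f : Flow) : Prop :=
  (∀ m i, i ≤ m → m + 1 ≤ n → f.dl m i + f.dr m i + f.hz (m + 1) i = 0) ∧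
  (∀ m i, i + 1 ≤ m → m + 1 ≤ n → f.hz m i + f.dl m (i + 1) + f.dr m i = 0)

/-- An integral flow class. -/
def IntegralFlow (f : Flow) : Prop :=
  ∀ m i, (∃ z : ℤ, f.dl m i = (z : ℝ)) ∧ (∃ z : ℤ, f.dr m i = (z : ℝ)) ∧
    (∃ z : ℤ, f.hz m i = (z : ℝ))

/-- A `2^ℓ`-integral flow class. -/
def PowIntegral (l : ℕ) (f : Flow) : Prop :=
  ∀ m i, (∃ z : ℤ, f.dl m i = (z : ℝ) * 2 ^ l) ∧ (∃ z : ℤ, f.dr m i = (z : ℝ) * 2 ^ l) ∧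
    (∃ z : ℤ, f.hz m i = (z : ℝ) * 2 ^ l)

/-- Rhombi (unions of an upright and a downright hive triangle sharing a side),
indexed by the direction of their diagonal:
* `hzD m i` has horizontal diagonal `hz (m+1) i`, triangles `up m i` and `down (m+1) i`;
* `dlD m i` has diagonal `dl m (i+1)`, triangles `up m (i+1)` and `down m i`;
* `drD m i` has diagonal `dr m i`, triangles `up m i` and `down m i`. -/
inductive Rhombus : Type
  | hzD (m i : ℕ)
  | dlD (m i : ℕ)
  | drD (m i : ℕ)
  deriving DecidableEq

namespace Rhombus

def valid (n : ℕ) : Rhombus → Prop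
  | hzD m i => i ≤ m ∧ m + 2 ≤ n
  | dlD m i => i + 1 ≤ m ∧ m + 1 ≤ n
  | drD m i => i + 1 ≤ m ∧ m + 1 ≤ n

/-- The diagonal of a rhombus (joining its two obtuse vertices). -/
def diag : Rhombus → EdgeK
  | hzD m i => .hz (m+1) i
  | dlD m i => .dl m (i+1)
  | drD m i => .dr m i

/-- The upright hive triangle of a rhombus. -/
def triU : Rhombus → Tri
  | hzD m i => .up m i
  | dlD m i => .up m (i+1)
  | drD m i => .up m i

/-- The downright hive triangle of a rhombus. -/
def triD : Rhombus → Tri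
  | hzD m i => .down (m+1) i
  | dlD m i => .down m i
  | drD m i => .down m i

end Rhombus

/-- The slack `σ(ρ,f)` of a rhombus `ρ` with respect to a flow class `f`:
the sum of the values of the corresponding hive function at the two obtuse
vertices minus the sum at the two acute vertices, expressed through the
throughputs of the two sides of `ρ` parallel to one fixed direction. -/
noncomputable def slack (f : Flow) : Rhombus → ℝ
  | .hzD m i => f.dl (m+1) (i+1) - f.dl m i
  | .dlD m i => f.hz (m+1) (i+1) - f.hz m i
  | .drD m i => f.hz m i - f.hz (m+1) i

/-- A hive flow: a flow class all of whose rhombus slacks are nonnegative. -/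
def IsHive (n : ℕ) (f : Flow) : Prop :=
  IsFlow n f ∧ ∀ ρ : Rhombus, ρ.valid n → 0 ≤ slack f ρ

/-- `∑_{i<n} lam i`, i.e. `|λ|` for `λ ∈ ℕⁿ`. -/
def psum (n : ℕ) (lam : ℕ → ℕ) : ℕ := ∑ i ∈ Finset.range n, lam i

/-- `λ, μ, ν ∈ ℕⁿ` are weakly decreasing with `|ν| = |λ| + |μ|`. -/
def PartitionData (n : ℕ) (lam mu nu : ℕ → ℕ) : Prop :=
  (∀ i j, i ≤ j → j + 1 ≤ n → lam j ≤ lam i) ∧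
  (∀ i j, i ≤ j → j + 1 ≤ n → mu j ≤ mu i) ∧
  (∀ i j, i ≤ j → j + 1 ≤ n → nu j ≤ nu i) ∧
  psum n nu = psum n lam + psum n mu

/-- Membership in the polytope `B(λ,μ,ν)` of bounded hive flows.
The `i`-th right border edge from the top is `dr (i-1) (i-1)` with capacity
`λ_i = lam (i-1)`; the `i`-th bottom border edge from the right is
`hz n (n-i)` with capacity `μ_i`; the `i`-th left border edge from the top is
`dl (i-1) 0` with capacity `ν_i`. -/
def MemB (n : ℕ) (lam mu nu : ℕ → ℕ) (f : Flow) : Prop :=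
  Normalized n f ∧ IsHive n f ∧
  (∀ m, m + 1 ≤ n → 0 ≤ f.dr m m ∧ f.dr m m ≤ (lam m : ℝ)) ∧
  (∀ i, i + 1 ≤ n → 0 ≤ f.hz n i ∧ f.hz n i ≤ (mu (n - 1 - i) : ℝ)) ∧
  (∀ m, m + 1 ≤ n → 0 ≤ -(f.dl m 0) ∧ -(f.dl m 0) ≤ (nu m : ℝ))

/-- Membership in the polytope `P(λ,μ,ν)` of capacity achieving hive flows. -/
def MemP (n : ℕ) (lam mu nu : ℕ → ℕ) (f : Flow) : Prop :=
  Normalized n f ∧ IsHive n f ∧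
  (∀ m, m + 1 ≤ n → f.dr m m = (lam m : ℝ)) ∧
  (∀ i, i + 1 ≤ n → f.hz n i = (mu (n - 1 - i) : ℝ)) ∧
  (∀ m, m + 1 ≤ n → -(f.dl m 0) = (nu m : ℝ))

/-- `B(λ,μ,ν)_ℤ`. -/
def MemBZ (n : ℕ) (lam mu nu : ℕ → ℕ) (f : Flow) : Prop :=
  MemB n lam mu nu f ∧ IntegralFlow f

/-- `P(λ,μ,ν)_ℤ`. -/
def MemPZ (n : ℕ) (lam mu nu : ℕ → ℕ) (f : Flow) : Prop :=
  MemP n lam mu nu f ∧ IntegralFlow f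

/-- The overall throughput `δ(f)`: the total throughput through the right and
bottom borders of `Δ`. -/
noncomputable def thr (n : ℕ) (f : Flow) : ℝ :=
  ∑ m ∈ Finset.range n, f.dr m m + ∑ i ∈ Finset.range n, f.hz n i

/-! ### The honeycomb graph `G` -/

/-- Vertices of the honeycomb graph `G`: white vertices on the edges of `Δ`,
black vertices in the hive triangles, a source and a target. -/
inductive GVertex : Type
  | white (e : EdgeK)
  | black (T : Tri)
  | src
  | tgt
  deriving DecidableEq

/-- The adjacency of the directed honeycomb graph `G` (each undirected edge
appears as two opposite directed edges). -/
def GAdj (n : ℕ) (u v : GVertex) : Prop :=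
  match u, v with
  | .white e, .black T => e.valid n ∧ T.valid n ∧ sideOf e T
  | .black T, .white e => e.valid n ∧ T.valid n ∧ sideOf e T
  | .src, .white e => e.valid n ∧ (onRight n e ∨ onBottom n e)
  | .white e, .src => e.valid n ∧ (onRight n e ∨ onBottom n e)
  | .tgt, .white e => e.valid n ∧ onLeft n e
  | .white e, .tgt => e.valid n ∧ onLeft n e
  | _, _ => False

/-- The (cyclically) consecutive pairs of a list. -/
def cyclePairs (l : List GVertex) : List (GVertex × GVertex) := l.zip (l.rotate 1)

/-- A (directed) cycle in `G`, recorded as the list of its pairwise distinct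
vertices. -/
def IsGCycle (n : ℕ) (l : List GVertex) : Prop :=
  l ≠ [] ∧ l.Nodup ∧ ∀ p ∈ cyclePairs l, GAdj n p.1 p.2

/-- A proper cycle uses neither the source nor the target. -/
def ProperCycle (l : List GVertex) : Prop :=
  GVertex.src ∉ l ∧ GVertex.tgt ∉ l

/-- The throughput function of the integral flow class defined by a cycle in `G`. -/
def cycleDelta (l : List GVertex) (e : EdgeK) : ℝ :=
  (if (GVertex.white e, GVertex.black (upOf e)) ∈ cyclePairs l then (1 : ℝ) else 0) -
  (if (GVertex.black (upOf e), GVertex.white e) ∈ cyclePairs l then (1 : ℝ) else 0)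

/-- The flow class `f + c` for a cycle `c` in `G`. -/
noncomputable def addCycle (f : Flow) (l : List GVertex) : Flow :=
  ⟨fun m i => f.dl m i + cycleDelta l (.dl m i),
   fun m i => f.dr m i + cycleDelta l (.dr m i),
   fun m i => f.hz m i + cycleDelta l (.hz m i)⟩

/-- `f` and `g` are neighbours: `g - f` is a proper cycle in `G`. -/
def NeighbourFlow (n : ℕ) (f g : Flow) : Prop :=
  ∃ l : List GVertex, IsGCycle n l ∧ ProperCycle l ∧
    ∀ e : EdgeK, g.thru e - f.thru e = cycleDelta l e

/-- The support of (the reduced representative of) a flow class `d`, as a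
relation on directed edges of `G`. -/
def suppEdge (n : ℕ) (d : Flow) (u v : GVertex) : Prop :=
  match u, v with
  | .white e, .black T =>
      e.valid n ∧ T.valid n ∧ ((T = upOf e ∧ 0 < d.thru e) ∨ (dnOf? e = some T ∧ d.thru e < 0))
  | .black T, .white e =>
      e.valid n ∧ T.valid n ∧ ((T = upOf e ∧ d.thru e < 0) ∨ (dnOf? e = some T ∧ 0 < d.thru e))
  | .src, .white e => e.valid n ∧ (onRight n e ∨ onBottom n e) ∧ 0 < d.thru e
  | .white e, .src => e.valid n ∧ (onRight n e ∨ onBottom n e) ∧ d.thru e < 0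
  | .tgt, .white e => e.valid n ∧ onLeft n e ∧ 0 < d.thru e
  | .white e, .tgt => e.valid n ∧ onLeft n e ∧ d.thru e < 0
  | _, _ => False

/-! ### Turns and slack contributions -/

/-- A turn: a path of length 2 in `G` inside `Δ`, entering a hive triangle
through the white vertex on side `inE` and leaving it through the white vertex
on side `outE`. -/
structure Turn : Type where
  tri : Tri
  inE : EdgeK
  outE : EdgeK
  deriving DecidableEq

namespace Turn

def valid (n : ℕ) (t : Turn) : Prop :=
  t.tri.valid n ∧ sideOf t.inE t.tri ∧ sideOf t.outE t.tri ∧ t.inE ≠ t.outE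

end Turn

/-- A turn is counterclockwise iff it goes to the clockwise-next side
(such a turn rotates counterclockwise around its pivot vertex). -/
def IsCCWTurn (t : Turn) : Prop := t.outE = cwNext t.tri t.inE

/-- A turn is clockwise iff it comes from the clockwise-next side of its exit. -/
def IsCWTurn (t : Turn) : Prop := t.inE = cwNext t.tri t.outE

/-- The side of the triangle of a turn not used by the turn. -/
def thirdSide (t : Turn) : EdgeK :=
  if cwNext t.tri t.outE = t.inE then cwNext t.tri t.inE else cwNext t.tri t.outE

/-- A slack contribution of a rhombus: a single turn (at an acute angle) or a
concatenated pair of turns (around an obtuse angle). -/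
inductive Contrib : Type
  | single (t : Turn)
  | double (t₁ t₂ : Turn)
  deriving DecidableEq

/-- The four negative slack contributions `Ψ₋(ρ)` of a rhombus: the two
counterclockwise turns at the acute angles, and the two clockwise length-4
paths around the obtuse angles. -/
def negContrib (ρ : Rhombus) : Fin 4 → Contrib :=
  ![Contrib.single ⟨ρ.triU, cwNext ρ.triU ρ.diag, cwNext ρ.triU (cwNext ρ.triU ρ.diag)⟩,
    Contrib.single ⟨ρ.triD, cwNext ρ.triD ρ.diag, cwNext ρ.triD (cwNext ρ.triD ρ.diag)⟩,
    Contrib.double ⟨ρ.triU, cwNext ρ.triU ρ.diag, ρ.diag⟩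
      ⟨ρ.triD, ρ.diag, cwNext ρ.triD (cwNext ρ.triD ρ.diag)⟩,
    Contrib.double ⟨ρ.triD, cwNext ρ.triD ρ.diag, ρ.diag⟩
      ⟨ρ.triU, ρ.diag, cwNext ρ.triU (cwNext ρ.triU ρ.diag)⟩]

/-- The four positive slack contributions `Ψ₊(ρ)` of a rhombus: the two
clockwise turns at the acute angles, and the two counterclockwise length-4
paths around the obtuse angles. -/
def posContrib (ρ : Rhombus) : Fin 4 → Contrib :=
  ![Contrib.single ⟨ρ.triU, cwNext ρ.triU (cwNext ρ.triU ρ.diag), cwNext ρ.triU ρ.diag⟩,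
    Contrib.single ⟨ρ.triD, cwNext ρ.triD (cwNext ρ.triD ρ.diag), cwNext ρ.triD ρ.diag⟩,
    Contrib.double ⟨ρ.triD, cwNext ρ.triD (cwNext ρ.triD ρ.diag), ρ.diag⟩
      ⟨ρ.triU, ρ.diag, cwNext ρ.triU ρ.diag⟩,
    Contrib.double ⟨ρ.triU, cwNext ρ.triU (cwNext ρ.triU ρ.diag), ρ.diag⟩
      ⟨ρ.triD, ρ.diag, cwNext ρ.triD ρ.diag⟩]

/-- The antipodal contribution of the `j`-th negative slack contribution of a
rhombus: reverse it and rotate by 180°.  It is a positive contribution. -/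
def antipodalContrib (ρ : Rhombus) : Fin 4 → Contrib :=
  ![posContrib ρ 1, posContrib ρ 0, posContrib ρ 3, posContrib ρ 2]

/-- The directed edges of `G` used by a turn. -/
def turnGEdges (t : Turn) : List (GVertex × GVertex) :=
  [(GVertex.white t.inE, GVertex.black t.tri), (GVertex.black t.tri, GVertex.white t.outE)]

/-- The directed edges of `G` used by a slack contribution. -/
def Contrib.gedges : Contrib → List (GVertex × GVertex)
  | .single t => turnGEdges t
  | .double t₁ t₂ => turnGEdges t₁ ++ turnGEdges t₂

/-- The contribution `c` is contained in the support of the flow class `d`. -/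
def ContribInSupp (n : ℕ) (d : Flow) (c : Contrib) : Prop :=
  ∀ p ∈ c.gedges, suppEdge n d p.1 p.2

/-- The contribution `c` is contained in (the edge set of) the cycle `l`. -/
def ContribInCycle (c : Contrib) (l : List GVertex) : Prop :=
  ∀ p ∈ c.gedges, p ∈ cyclePairs l

/-- A cycle is `f`-hive preserving iff it uses no negative slack contribution
of an `f`-flat rhombus. -/
def CycleHivePreserving (n : ℕ) (f : Flow) (l : List GVertex) : Prop :=
  ∀ ρ : Rhombus, ρ.valid n → slack f ρ = 0 →
    ∀ j : Fin 4, ¬ ContribInCycle (negContrib ρ j) l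

/-- A cycle is `f`-secure iff it is `f`-hive preserving and does not use both
counterclockwise turns at the acute angles of any nearly `f`-flat rhombus. -/
def CycleSecure (n : ℕ) (f : Flow) (l : List GVertex) : Prop :=
  CycleHivePreserving n f l ∧
  ∀ ρ : Rhombus, ρ.valid n → slack f ρ = 1 →
    ¬ (ContribInCycle (negContrib ρ 0) l ∧ ContribInCycle (negContrib ρ 1) l)

/-! ### The digraph `R` and residual digraphs -/

/-- Vertices of the auxiliary digraph `R`: the turns, the source and the target. -/
inductive RVertex : Type
  | turn (t : Turn)
  | src
  | tgt
  deriving DecidableEq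

/-- A turnedge: an ordered pair of turns whose concatenation is a path of
length 4 in `G`. -/
def TurnEdge (t₁ t₂ : Turn) : Prop :=
  t₁.outE = t₂.inE ∧ t₁.tri ≠ t₂.tri ∧ t₁.inE ≠ t₂.outE

/-- Adjacency of the digraph `R`. -/
def RAdj (n : ℕ) (u v : RVertex) : Prop :=
  match u, v with
  | .turn t₁, .turn t₂ => t₁.valid n ∧ t₂.valid n ∧ TurnEdge t₁ t₂
  | .src, .turn t => t.valid n ∧ (onRight n t.inE ∨ onBottom n t.inE)
  | .turn t, .src => t.valid n ∧ (onRight n t.outE ∨ onBottom n t.outE)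
  | .turn t, .tgt => t.valid n ∧ onLeft n t.outE
  | .tgt, .turn t => t.valid n ∧ onLeft n t.inE
  | _, _ => False

/-- A turnvertex deleted in `R_f`: a single-turn negative contribution of an
`f`-flat rhombus. -/
def DelTurn (n : ℕ) (f : Flow) (t : Turn) : Prop :=
  ∃ ρ : Rhombus, ρ.valid n ∧ slack f ρ = 0 ∧ ∃ j : Fin 4, negContrib ρ j = Contrib.single t

/-- A turnedge deleted in `R_f`: a double negative contribution of an
`f`-flat rhombus. -/
def DelTurnEdge (n : ℕ) (f : Flow) (t₁ t₂ : Turn) : Prop :=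
  ∃ ρ : Rhombus, ρ.valid n ∧ slack f ρ = 0 ∧ ∃ j : Fin 4, negContrib ρ j = Contrib.double t₁ t₂

/-- A right or bottom border edge saturated by `f`. -/
def SatRB (n : ℕ) (lam mu : ℕ → ℕ) (f : Flow) (e : EdgeK) : Prop :=
  (∃ m, m + 1 ≤ n ∧ e = EdgeK.dr m m ∧ f.dr m m = (lam m : ℝ)) ∨
  (∃ i, i + 1 ≤ n ∧ e = EdgeK.hz n i ∧ f.hz n i = (mu (n - 1 - i) : ℝ))

/-- A left border edge saturated by `f`. -/
def SatL (n : ℕ) (nu : ℕ → ℕ) (f : Flow) (e : EdgeK) : Prop :=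
  ∃ m, m + 1 ≤ n ∧ e = EdgeK.dl m 0 ∧ -(f.dl m 0) = (nu m : ℝ)

/-- Adjacency of the residual digraph `R_f`. -/
def ResidAdj (n : ℕ) (lam mu nu : ℕ → ℕ) (f : Flow) (u v : RVertex) : Prop :=
  match u, v with
  | .turn t₁, .turn t₂ =>
      RAdj n (.turn t₁) (.turn t₂) ∧ ¬ DelTurn n f t₁ ∧ ¬ DelTurn n f t₂ ∧
        ¬ DelTurnEdge n f t₁ t₂
  | .src, .turn t => RAdj n .src (.turn t) ∧ ¬ DelTurn n f t ∧ ¬ SatRB n lam mu f t.inE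
  | .turn t, .src => RAdj n (.turn t) .src ∧ ¬ DelTurn n f t ∧ ¬ SatRB n lam mu f t.outE
  | .turn t, .tgt => RAdj n (.turn t) .tgt ∧ ¬ DelTurn n f t ∧ ¬ SatL n nu f t.outE
  | .tgt, .turn t => RAdj n .tgt (.turn t) ∧ ¬ DelTurn n f t ∧ ¬ SatL n nu f t.inE
  | _, _ => False

/-- A right or bottom border edge at which an additional unit of `2^ℓ` flow
does not fit. -/
def SatRB2 (n : ℕ) (lam mu : ℕ → ℕ) (f : Flow) (l : ℕ) (e : EdgeK) : Prop :=
  (∃ m, m + 1 ≤ n ∧ e = EdgeK.dr m m ∧ (lam m : ℝ) < f.dr m m + 2 ^ l) ∨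
  (∃ i, i + 1 ≤ n ∧ e = EdgeK.hz n i ∧ (mu (n - 1 - i) : ℝ) < f.hz n i + 2 ^ l)

/-- A left border edge at which an additional unit of `2^ℓ` flow does not fit. -/
def SatL2 (n : ℕ) (nu : ℕ → ℕ) (f : Flow) (l : ℕ) (e : EdgeK) : Prop :=
  ∃ m, m + 1 ≤ n ∧ e = EdgeK.dl m 0 ∧ (nu m : ℝ) < -(f.dl m 0) + 2 ^ l

/-- Adjacency of the residual digraph `R_f^(ℓ)`, obtained from `R_f` by
further deleting the turnedges crossing border edges without room for `2^ℓ`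
additional flow. -/
def ResidAdjL (n : ℕ) (lam mu nu : ℕ → ℕ) (f : Flow) (l : ℕ) (u v : RVertex) : Prop :=
  match u, v with
  | .src, .turn t => ResidAdj n lam mu nu f .src (.turn t) ∧ ¬ SatRB2 n lam mu f l t.inE
  | .turn t, .src => ResidAdj n lam mu nu f (.turn t) .src ∧ ¬ SatRB2 n lam mu f l t.outE
  | .turn t, .tgt => ResidAdj n lam mu nu f (.turn t) .tgt ∧ ¬ SatL2 n nu f l t.outE
  | .tgt, .turn t => ResidAdj n lam mu nu f .tgt (.turn t) ∧ ¬ SatL2 n nu f l t.inE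
  | u, v => ResidAdj n lam mu nu f u v

/-- An `s`-`t`-turnpath for an adjacency relation `A` on `RVertex`. -/
def IsSTPath (A : RVertex → RVertex → Prop) (l : List RVertex) : Prop :=
  l.Nodup ∧ l.Chain' A ∧ l.head? = some RVertex.src ∧ l.getLast? = some RVertex.tgt

/-- A `t`-`s`-turnpath. -/
def IsTSPath (A : RVertex → RVertex → Prop) (l : List RVertex) : Prop :=
  l.Nodup ∧ l.Chain' A ∧ l.head? = some RVertex.tgt ∧ l.getLast? = some RVertex.src

/-- A turncycle (which may pass through `s` or `t`). -/
def IsRCycle (A : RVertex → RVertex → Prop) (l : List RVertex) : Prop :=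
  l ≠ [] ∧ l.Nodup ∧ l.Chain' A ∧
    ∀ a b, l.getLast? = some a → l.head? = some b → A a b

/-- A complete turnpath: an `s`-`t`-turnpath, a `t`-`s`-turnpath, or a
turncycle. -/
def IsCompleteTP (A : RVertex → RVertex → Prop) (l : List RVertex) : Prop :=
  IsSTPath A l ∨ IsTSPath A l ∨ IsRCycle A l

/-- The throughput function of `π(p)` for a complete turnpath `p`
(vertex-distinct, so in/outflow at a turnvertex equals occurrence):
total flow into the two turnvertices pointing from the white vertex of the
edge into its upright triangle, minus the total flow out of the two
turnvertices pointing out of the triangle towards the edge. -/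
def pathDelta (l : List RVertex) (e : EdgeK) : ℝ :=
  (if RVertex.turn ⟨upOf e, e, cwNext (upOf e) e⟩ ∈ l then (1 : ℝ) else 0) +
  (if RVertex.turn ⟨upOf e, e, cwNext (upOf e) (cwNext (upOf e) e)⟩ ∈ l then (1 : ℝ) else 0) -
  (if RVertex.turn ⟨upOf e, cwNext (upOf e) e, e⟩ ∈ l then (1 : ℝ) else 0) -
  (if RVertex.turn ⟨upOf e, cwNext (upOf e) (cwNext (upOf e) e), e⟩ ∈ l then (1 : ℝ) else 0)

/-- The flow class `f + π(p)` for a turnpath `p`. -/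
noncomputable def addPath (f : Flow) (l : List RVertex) : Flow :=
  ⟨fun m i => f.dl m i + pathDelta l (.dl m i),
   fun m i => f.dr m i + pathDelta l (.dr m i),
   fun m i => f.hz m i + pathDelta l (.hz m i)⟩

/-! ### Flatspaces, sides, entrance and exit edges -/

/-- Two hive triangles are `f`-adjacent if they form an `f`-flat rhombus. -/
def FlatAdjTri (n : ℕ) (f : Flow) (T T' : Tri) : Prop :=
  ∃ ρ : Rhombus, ρ.valid n ∧ slack f ρ = 0 ∧
    ((T = ρ.triU ∧ T' = ρ.triD) ∨ (T = ρ.triD ∧ T' = ρ.triU))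

/-- An `f`-flatspace: a connected component of the `f`-adjacency relation on
hive triangles. -/
def IsFlatspace (n : ℕ) (f : Flow) (L : Set Tri) : Prop :=
  ∃ T : Tri, T.valid n ∧ L = {T' | Relation.ReflTransGen (FlatAdjTri n f) T T'}

/-- A valid triangle belonging to `L`. -/
def inL (n : ℕ) (L : Set Tri) (T : Tri) : Prop := T.valid n ∧ T ∈ L

/-- The downright triangle adjacent to `e` exists and belongs to `L`. -/
def dnIn (n : ℕ) (L : Set Tri) (e : EdgeK) : Prop :=
  ∃ T, dnOf? e = some T ∧ inL n L T

/-- A border edge of a set `L` of hive triangles: exactly one of its adjacent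
hive triangles belongs to `L`. -/
def BorderEdge (n : ℕ) (L : Set Tri) (e : EdgeK) : Prop :=
  e.valid n ∧ ((inL n L (upOf e) ∧ ¬ dnIn n L e) ∨ (dnIn n L e ∧ ¬ inL n L (upOf e)))

/-- The collinear successor of an edge of `Δ` along its line. -/
def lineSucc : EdgeK → EdgeK
  | .dl m i => .dl (m+1) i
  | .dr m i => .dr (m+1) (i+1)
  | .hz m i => .hz m (i+1)

/-- A side of `L`: a maximal run of consecutive collinear border edges of `L`. -/
def IsSide (n : ℕ) (L : Set Tri) (s : List EdgeK) : Prop :=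
  s ≠ [] ∧ (∀ e ∈ s, BorderEdge n L e) ∧ s.Chain' (fun a b => b = lineSucc a) ∧
  (∀ e a, s.head? = some a → lineSucc e = a → ¬ BorderEdge n L e) ∧
  (∀ a, s.getLast? = some a → ¬ BorderEdge n L (lineSucc a))

/-- The list recording a side of `L` (in `lineSucc` order) runs clockwise
around `L` (i.e. with the interior of `L` on its right). -/
def sideCW (n : ℕ) (L : Set Tri) (s : List EdgeK) : Prop :=
  ∃ e, s.head? = some e ∧
    (match e with
     | EdgeK.dr _ _ => inL n L (upOf e)
     | _ => dnIn n L e)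

/-- `e` is the entrance edge of the side `s` of `L` (the first edge of the
side in clockwise order around `L`). -/
def entranceOf (n : ℕ) (L : Set Tri) (s : List EdgeK) (e : EdgeK) : Prop :=
  (sideCW n L s ∧ s.head? = some e) ∨ (¬ sideCW n L s ∧ s.getLast? = some e)

/-- `e` is the exit edge of the side `s` of `L` (the last edge of the side in
clockwise order around `L`). -/
def exitOf (n : ℕ) (L : Set Tri) (s : List EdgeK) (e : EdgeK) : Prop :=
  (sideCW n L s ∧ s.getLast? = some e) ∨ (¬ sideCW n L s ∧ s.head? = some e)

open Classical in
/-- The throughput `δ(L,e,d)` of a flow class `d` into `L` through a border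
edge `e` of `L`. -/
noncomputable def inflowEdge (n : ℕ) (L : Set Tri) (d : Flow) (e : EdgeK) : ℝ :=
  if inL n L (upOf e) then d.thru e else -(d.thru e)

/-- `in(L,e,d)`. -/
noncomputable def inPosEdge (n : ℕ) (L : Set Tri) (d : Flow) (e : EdgeK) : ℝ :=
  max (inflowEdge n L d e) 0

/-- `out(L,e,d)`. -/
noncomputable def outPosEdge (n : ℕ) (L : Set Tri) (d : Flow) (e : EdgeK) : ℝ :=
  max (-(inflowEdge n L d e)) 0

/-- `in(L,a,d)`: the `L`-inflow of `d` through the side `a` (given as the list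
of its edges). -/
noncomputable def inSide (n : ℕ) (L : Set Tri) (d : Flow) (s : List EdgeK) : ℝ :=
  (s.map (inPosEdge n L d)).sum

/-- `out(L,a,d)`. -/
noncomputable def outSide (n : ℕ) (L : Set Tri) (d : Flow) (s : List EdgeK) : ℝ :=
  (s.map (outPosEdge n L d)).sum

/-- `v = (m,i)` is a vertex of the hive triangle `T`. -/
def vertexInTri (v : ℕ × ℕ) (T : Tri) : Prop :=
  match T with
  | .up m i => v = (m, i) ∨ v = (m+1, i) ∨ v = (m+1, i+1)
  | .down m i => v = (m, i) ∨ v = (m, i+1) ∨ v = (m+1, i+1)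

/-- The six hive triangles around an interior vertex `x(m,i)`. -/
def sixAround (m i : ℕ) : List Tri :=
  [.up m i, .down m i, .up (m-1) i, .down (m-1) (i-1), .up (m-1) (i-1), .down m (i-1)]

/-- The vertex `x(m,i)` is interior and all six hive triangles around it
belong to `L`. -/
def SurroundedVertex (n : ℕ) (L : Set Tri) (m i : ℕ) : Prop :=
  1 ≤ i ∧ i + 1 ≤ m ∧ m + 1 ≤ n ∧ ∀ T ∈ sixAround m i, T ∈ L

/-- An inner triangle of `L`: all of its vertices are surrounded by triangles
of `L`.  Triangles of `L` that are not inner are the border triangles. -/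
def InnerTri (n : ℕ) (L : Set Tri) (T : Tri) : Prop :=
  ∀ m i, vertexInTri (m, i) T → SurroundedVertex n L m i

/-- The hive triangle adjacent to `thirdSide t` on the other side of the
triangle of `t` belongs to `L`.  (For a counterclockwise turn this is the
rhombus through whose acute angle the turn passes.) -/
def acrossInL (n : ℕ) (L : Set Tri) (t : Turn) : Prop :=
  (upOf (thirdSide t) ≠ t.tri ∧ inL n L (upOf (thirdSide t))) ∨
  (∃ T', dnOf? (thirdSide t) = some T' ∧ T' ≠ t.tri ∧ inL n L T')

/-! ### Weighted families of complete turnpaths -/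

/-- A weighted family of complete turnpaths for the adjacency `A`: a
nonnegative weight on lists of `R`-vertices supported on complete turnpaths. -/
def WeightedFamily (A : RVertex → RVertex → Prop) (φ : List RVertex → ℝ) : Prop :=
  (∀ l, 0 ≤ φ l) ∧ ∀ l, ¬ IsCompleteTP A l → φ l = 0

/-- The turnpath `l` enters `L` by crossing the entrance edge of the side `s`. -/
def EntersVia (n : ℕ) (L : Set Tri) (s : List EdgeK) (l : List RVertex) : Prop :=
  ∃ e, entranceOf n L s e ∧ ∃ t : Turn, RVertex.turn t ∈ l ∧ t.inE = e ∧ inL n L t.tri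

/-- The turnpath `l` exits `L` by crossing the exit edge of the side `s`. -/
def ExitsVia (n : ℕ) (L : Set Tri) (s : List EdgeK) (l : List RVertex) : Prop :=
  ∃ e, exitOf n L s e ∧ ∃ t : Turn, RVertex.turn t ∈ l ∧ t.outE = e ∧ inL n L t.tri

/-- The entrance weight `in(L,a,φ)`. -/
noncomputable def inWeight (n : ℕ) (L : Set Tri) (s : List EdgeK)
    (φ : List RVertex → ℝ) : ℝ :=
  ∑ᶠ l ∈ {l : List RVertex | EntersVia n L s l}, φ l

/-- The exit weight `out(L,a,φ)`. -/
noncomputable def outWeight (n : ℕ) (L : Set Tri) (s : List EdgeK)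
    (φ : List RVertex → ℝ) : ℝ :=
  ∑ᶠ l ∈ {l : List RVertex | ExitsVia n L s l}, φ l

/-- A flow class `d` is `f`-hive preserving if `f + ε d ∈ B(λ,μ,ν)` for all
sufficiently small `ε > 0`. -/
def HivePreserving (n : ℕ) (lam mu nu : ℕ → ℕ) (f d : Flow) : Prop :=
  ∃ ε₀ : ℝ, 0 < ε₀ ∧ ∀ ε : ℝ, 0 < ε → ε ≤ ε₀ → MemB n lam mu nu (f + ε • d)

/-- The throughput of `π(d')` through the edge `e`, for the nonnegative flow
`d' = ∑_p φ(p)·p` on `R_f` determined by a weighted family `φ`. -/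
noncomputable def wDelta (φ : List RVertex → ℝ) (e : EdgeK) : ℝ :=
  ∑ᶠ l : List RVertex, φ l * pathDelta l e

/-- The overall throughput `δ(π(d'))` of the flow `d' = ∑_p φ(p)·p` on `R_f`. -/
noncomputable def piThr (n : ℕ) (φ : List RVertex → ℝ) : ℝ :=
  ∑ m ∈ Finset.range n, wDelta φ (.dr m m) + ∑ i ∈ Finset.range n, wDelta φ (.hz n i)

/-! ### Distance between flow classes -/

/-- The `L₁`-distance between two flow classes: the sum over the edges of `Δ`
of the absolute differences of the throughputs. -/
noncomputable def distFlow (n : ℕ) (f g : Flow) : ℝ :=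
  ∑ m ∈ Finset.range (n+1), ∑ i ∈ Finset.range (n+1),
    ((if i ≤ m ∧ m + 1 ≤ n then |g.dl m i - f.dl m i| else 0) +
     (if i ≤ m ∧ m + 1 ≤ n then |g.dr m i - f.dr m i| else 0) +
     (if i + 1 ≤ m ∧ m ≤ n then |g.hz m i - f.hz m i| else 0))

/-! ### Hives as functions on the vertices of `Δ` -/

/-- A hive on `Δ`: a function on the vertices `x(m,i)` (`i ≤ m ≤ n`) with
`h(x₀) = 0` at the top vertex, such that for every rhombus the sum of the
values at the two obtuse vertices is at least the sum at the two acute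
vertices. -/
def IsHiveFn (n : ℕ) (h : ℕ → ℕ → ℝ) : Prop :=
  h 0 0 = 0 ∧
  (∀ m i, i ≤ m → m + 2 ≤ n → h m i + h (m+2) (i+1) ≤ h (m+1) i + h (m+1) (i+1)) ∧
  (∀ m i, i + 1 ≤ m → m + 1 ≤ n → h m i + h (m+1) (i+2) ≤ h m (i+1) + h (m+1) (i+1)) ∧
  (∀ m i, i + 1 ≤ m → m + 1 ≤ n → h (m+1) i + h m (i+1) ≤ h m i + h (m+1) (i+1))

/-- A vertex of `Δ` lying on the boundary of the big triangle. -/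
def BdryVtx (n : ℕ) (m i : ℕ) : Prop :=
  i ≤ m ∧ m ≤ n ∧ (i = 0 ∨ i = m ∨ m = n)

/-! ### Convex sets and canonical turnpaths -/

/-- Planar coordinates of the vertex `x(m,i)` (up to an affine change of
coordinates, which does not affect convexity). -/
def vtxPoint (m i : ℕ) : ℝ × ℝ := (2 * (i : ℝ) - (m : ℝ), -(m : ℝ))

/-- The closed triangle in the plane corresponding to a hive triangle. -/
def triHull (T : Tri) : Set (ℝ × ℝ) :=
  match T with
  | .up m i => convexHull ℝ {vtxPoint m i, vtxPoint (m+1) i, vtxPoint (m+1) (i+1)}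
  | .down m i => convexHull ℝ {vtxPoint m i, vtxPoint m (i+1), vtxPoint (m+1) (i+1)}

/-- A convex set in the triangular graph `Δ`: a nonempty union of (valid) hive
triangles that is convex as a subset of the plane. -/
def IsConvexSet (n : ℕ) (L : Set Tri) : Prop :=
  L.Nonempty ∧ (∀ T ∈ L, T.valid n) ∧ Convex ℝ (⋃ T ∈ L, triHull T)

/-- The edge `e` belongs to (a triangle of) `L`. -/
def edgeInL (L : Set Tri) (e : EdgeK) : Prop := ∃ T ∈ L, sideOf e T

/-- A hive flow on the convex set `L`: a flow class on the subgraph `G_L`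
(conservation holds at the black vertices of all triangles of `L`; values on
edges outside `L` vanish) whose slack is nonnegative on every rhombus
contained in `L`. -/
def HiveFlowOn (n : ℕ) (L : Set Tri) (d : Flow) : Prop :=
  (∀ m i, Tri.up m i ∈ L → d.dl m i + d.dr m i + d.hz (m+1) i = 0) ∧
  (∀ m i, Tri.down m i ∈ L → d.hz m i + d.dl m (i+1) + d.dr m i = 0) ∧
  (∀ ρ : Rhombus, ρ.valid n → ρ.triU ∈ L → ρ.triD ∈ L → 0 ≤ slack d ρ) ∧
  (∀ e : EdgeK, ¬ edgeInL L e → d.thru e = 0)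

/-- The two endpoints of an edge of `Δ`. -/
def edgeEnds : EdgeK → (ℕ × ℕ) × (ℕ × ℕ)
  | .dl m i => ((m, i), (m+1, i))
  | .dr m i => ((m, i), (m+1, i+1))
  | .hz m i => ((m, i), (m, i+1))

/-- `v` is an obtuse (120°) corner of `L`: exactly two triangles of `L`
contain `v`. -/
def ObtuseCornerAt (n : ℕ) (L : Set Tri) (v : ℕ × ℕ) : Prop :=
  ∃ T₁ T₂ : Tri, T₁ ≠ T₂ ∧ inL n L T₁ ∧ inL n L T₂ ∧
    vertexInTri v T₁ ∧ vertexInTri v T₂ ∧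
    ∀ T, inL n L T → vertexInTri v T → T = T₁ ∨ T = T₂

/-- Some endpoint of `e` is an obtuse corner of `L`. -/
def EndsAtObtuse (n : ℕ) (L : Set Tri) (e : EdgeK) : Prop :=
  ObtuseCornerAt n L (edgeEnds e).1 ∨ ObtuseCornerAt n L (edgeEnds e).2

/-- A canonical turnpath of the convex set `L` (recorded by its list of
turns): either a single clockwise turn at an acute corner of `L`, or a
turnpath through the border triangles of `L`, starting at the entrance edge of
a side and ending at the exit edge of a side, traversing the border of `L`
counterclockwise (every counterclockwise turn closes off a rhombus leaving
`L`), never using two consecutive clockwise turns, and using two consecutive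
counterclockwise turns only to go around an obtuse corner of `L`. -/
def CanonicalTP (n : ℕ) (L : Set Tri) (p : List Turn) : Prop :=
  (∃ t, p = [t] ∧ t.valid n ∧ t.tri ∈ L ∧ IsCWTurn t ∧
    BorderEdge n L t.inE ∧ BorderEdge n L t.outE) ∨
  (2 ≤ p.length ∧
    (∀ t ∈ p, t.valid n ∧ inL n L t.tri ∧ ¬ InnerTri n L t.tri) ∧
    p.Chain' (fun t t' => TurnEdge t t' ∧ ¬ BorderEdge n L t.outE ∧
      ¬ (IsCWTurn t ∧ IsCWTurn t') ∧
      (IsCCWTurn t ∧ IsCCWTurn t' → EndsAtObtuse n L t.outE)) ∧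
    (∀ t ∈ p, IsCCWTurn t → ¬ acrossInL n L t) ∧
    (∀ t, p.head? = some t → ∃ s, IsSide n L s ∧ entranceOf n L s t.inE) ∧
    (∀ t, p.getLast? = some t → ∃ s, IsSide n L s ∧ exitOf n L s t.outE))

/-- A multiset of canonical turnpaths of `L`. -/
def MultisetCanonical (n : ℕ) (L : Set Tri) (φ : List Turn → ℕ) : Prop :=
  ∀ p, φ p ≠ 0 → CanonicalTP n L p

/-- `in(L,a,φ)`: the number, counted with multiplicity, of canonical
turnpaths of `φ` starting at the entrance edge of the side `a = s`. -/
noncomputable def inMs (n : ℕ) (L : Set Tri) (s : List EdgeK) (φ : List Turn → ℕ) : ℝ :=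
  ∑ᶠ p ∈ {p : List Turn | ∃ t, p.head? = some t ∧ entranceOf n L s t.inE}, (φ p : ℝ)

/-- `out(L,a,φ)`: the number, counted with multiplicity, of canonical
turnpaths of `φ` ending at the exit edge of the side `a = s`. -/
noncomputable def outMs (n : ℕ) (L : Set Tri) (s : List EdgeK) (φ : List Turn → ℕ) : ℝ :=
  ∑ᶠ p ∈ {p : List Turn | ∃ t, p.getLast? = some t ∧ exitOf n L s t.outE}, (φ p : ℝ)

end LRFlows

/-!
Cut the right and the bottom border of `Δ` into maximal runs of edges whose upright triangles
lie in one `f`-flatspace `L`; each run is a side of `L`. Two consecutive upright triangles of a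
run form, with the downright triangle between them, two `f`-flat rhombi, whose negative
contributions are missing from `R_f`. This leaves no way for a turnpath to enter `Δ` through an
edge of the run other than its entrance edge, or to leave it through an edge other than its exit
edge. A complete turnpath crosses a border edge at most once in each direction, since both
turns entering through it can only be reached from `s` (and both leaving turns only lead to
`s`). Hence the throughput of `π(d')` through the run is the entrance weight minus the exit
weight of the side, which by hypothesis is `in(L,a,d) - out(L,a,d)`, the throughput of `d`
through the run.
-/

lemma Set.Finite.setOf_nodup {α : Type*} {S : Set α} (hS : S.Finite) :
    {l : List α | l.Nodup ∧ ∀ x ∈ l, x ∈ S}.Finite := by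
  have := hS.fintype
  refine (Set.finite_range fun l : {l : List S // l.Nodup} => l.1.map Subtype.val).subset ?_
  rintro l ⟨hnd, hl⟩
  exact ⟨⟨l.pmap Subtype.mk hl, hnd.pmap fun _ _ _ _ => congrArg Subtype.val⟩,
    by simp [List.map_pmap]⟩

theorem Finset.sum_range_eq_of_forall_maximal_run {M : Type*} [AddCommMonoid M] {n : ℕ}
    {g h : ℕ → M} (link : ℕ → Prop)
    (hrun : ∀ a b, a ≤ b → b < n → (∀ j, a = j + 1 → ¬ link j) →
      (∀ k, a ≤ k → k < b → link k) → (b + 1 < n → ¬ link b) →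
      ∑ k ∈ Icc a b, g k = ∑ k ∈ Icc a b, h k) :
    ∑ k ∈ range n, g k = ∑ k ∈ range n, h k := by
  suffices key : ∀ d a, n - a = d → (∀ j, a = j + 1 → a < n → ¬ link j) →
      ∑ k ∈ Ico a n, g k = ∑ k ∈ Ico a n, h k by
    rw [range_eq_Ico]
    exact key _ 0 rfl fun j hj => absurd hj (Nat.succ_ne_zero j).symm
  intro d
  induction d using Nat.strong_induction_on with
  | _ d ih =>
    intro a hd hstart
    rcases Nat.lt_or_ge a n with han | han
    swap
    · simp [Ico_eq_empty_of_le han]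
    classical
    have hex : ∃ b, a ≤ b ∧ b < n ∧ (b + 1 < n → ¬ link b) :=
      ⟨n - 1, by omega, by omega, by omega⟩
    set b := Nat.find hex
    obtain ⟨hab, hbn, hend⟩ : a ≤ b ∧ b < n ∧ (b + 1 < n → ¬ link b) := Nat.find_spec hex
    have hlink : ∀ k, a ≤ k → k < b → link k := fun k hak hkb =>
      by_contra fun hk => Nat.find_min hex hkb ⟨hak, by omega, fun _ => hk⟩
    rw [← sum_Ico_consecutive g (by omega : a ≤ b + 1) hbn,
      ← sum_Ico_consecutive h (by omega : a ≤ b + 1) hbn, Ico_add_one_right_eq_Icc,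
      hrun a b hab hbn (fun j hj => hstart j hj han) hlink hend,
      ih (n - (b + 1)) (by omega) _ rfl fun j hj hjn => by
        simpa [← Nat.succ_inj.mp hj] using hend hjn]

namespace LRFlows

open Finset Relation

/-- The hive function of `f` in the normalisation `h(x₀) = 0`, obtained by integrating the
throughputs down the left border and then along row `m`. -/
noncomputable def hiveFn (f : Flow) (m i : ℕ) : ℝ :=
  -(∑ k ∈ range m, f.dl k 0) - ∑ j ∈ range i, f.hz m j

lemma hiveFn_succ_right (f : Flow) (m i : ℕ) :
    hiveFn f m (i + 1) = hiveFn f m i - f.hz m i := by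
  simp only [hiveFn, sum_range_succ]
  ring

lemma hiveFn_succ_down {n : ℕ} {f : Flow} (hf : IsFlow n f) {m : ℕ} (hm : m + 1 ≤ n) :
    ∀ {i : ℕ}, i ≤ m → hiveFn f (m + 1) i = hiveFn f m i - f.dl m i
  | 0, _ => by
    simp only [hiveFn, sum_range_succ, range_zero, sum_empty]
    ring
  | i + 1, hi => by
    have hup := hf.1 m i (by omega) hm
    have hdown := hf.2 m i hi hm
    rw [hiveFn_succ_right, hiveFn_succ_right, hiveFn_succ_down hf hm (by omega : i ≤ m)]
    linarith

lemma slack_drD_eq (f : Flow) (m i : ℕ) :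
    slack f (.drD m i) = hiveFn f m i + hiveFn f (m + 1) (i + 1) - hiveFn f m (i + 1) -
      hiveFn f (m + 1) i := by
  rw [hiveFn_succ_right, hiveFn_succ_right]
  simp only [slack]
  ring

lemma slack_dlD_eq (f : Flow) (m i : ℕ) :
    slack f (.dlD m i) = hiveFn f m (i + 1) + hiveFn f (m + 1) (i + 1) - hiveFn f m i -
      hiveFn f (m + 1) (i + 2) := by
  rw [hiveFn_succ_right, hiveFn_succ_right f (m + 1) (i + 1), hiveFn_succ_right f (m + 1) i]
  simp only [slack]
  ring

lemma slack_hzD_eq {n : ℕ} {f : Flow} (hf : IsFlow n f) {m i : ℕ} (hi : i ≤ m)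
    (hm : m + 2 ≤ n) :
    slack f (.hzD m i) = hiveFn f (m + 1) i + hiveFn f (m + 1) (i + 1) - hiveFn f m i -
      hiveFn f (m + 2) (i + 1) := by
  rw [hiveFn_succ_down hf (by omega) hi,
    hiveFn_succ_down hf (by omega : m + 1 + 1 ≤ n) (by omega : i + 1 ≤ m + 1)]
  simp only [slack]
  ring

def AffineOn (f : Flow) (a b c : ℝ) (T : Tri) : Prop :=
  ∀ p q : ℕ, vertexInTri (p, q) T → hiveFn f p q = a * p + b * q + c

lemma exists_affineOn (f : Flow) : ∀ T : Tri, ∃ a b c, AffineOn f a b c T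
  | .up m i => ⟨hiveFn f (m + 1) i - hiveFn f m i,
      hiveFn f (m + 1) (i + 1) - hiveFn f (m + 1) i,
      hiveFn f m i - (hiveFn f (m + 1) i - hiveFn f m i) * m -
        (hiveFn f (m + 1) (i + 1) - hiveFn f (m + 1) i) * i, by
      rintro p q (h | h | h) <;> obtain ⟨rfl, rfl⟩ := Prod.mk.inj h <;> push_cast <;> ring⟩
  | .down m i => ⟨hiveFn f (m + 1) (i + 1) - hiveFn f m (i + 1),
      hiveFn f m (i + 1) - hiveFn f m i,
      hiveFn f m i - (hiveFn f (m + 1) (i + 1) - hiveFn f m (i + 1)) * m -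
        (hiveFn f m (i + 1) - hiveFn f m i) * i, by
      rintro p q (h | h | h) <;> obtain ⟨rfl, rfl⟩ := Prod.mk.inj h <;> push_cast <;> ring⟩

/-- The slack of a rhombus is a second difference of the hive function, so it vanishes exactly
when the hive function is affine on the whole rhombus. -/
lemma FlatAdjTri.affineOn {n : ℕ} {f : Flow} (hf : IsFlow n f) {T T' : Tri} {a b c : ℝ}
    (h : FlatAdjTri n f T T') (hT : AffineOn f a b c T) : AffineOn f a b c T' := by
  obtain ⟨ρ, hρ, hflat, hTT'⟩ := h
  rcases ρ with ⟨m, i⟩ | ⟨m, i⟩ | ⟨m, i⟩ <;>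
  [rw [slack_hzD_eq hf hρ.1 hρ.2] at hflat; rw [slack_dlD_eq] at hflat;
    rw [slack_drD_eq] at hflat] <;>
  rcases hTT' with ⟨rfl, rfl⟩ | ⟨rfl, rfl⟩ <;>
  · have e₁ := hT _ _ (Or.inl rfl)
    have e₂ := hT _ _ (Or.inr (Or.inl rfl))
    have e₃ := hT _ _ (Or.inr (Or.inr rfl))
    rintro p q (h | h | h) <;> obtain ⟨rfl, rfl⟩ := Prod.mk.inj h <;> push_cast at * <;>
      linarith

instance (n : ℕ) (f : Flow) : Std.Symm (FlatAdjTri n f) :=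
  ⟨fun _ _ ⟨ρ, hρ, hflat, h⟩ => ⟨ρ, hρ, hflat, h.symm.imp And.symm And.symm⟩⟩

lemma exists_affineOn_of_reflTransGen {n : ℕ} {f : Flow} (hf : IsFlow n f) {T T' : Tri}
    (h : ReflTransGen (FlatAdjTri n f) T T') :
    ∃ a b c, AffineOn f a b c T ∧ AffineOn f a b c T' := by
  obtain ⟨a, b, c, hT⟩ := exists_affineOn f T
  refine ⟨a, b, c, hT, ?_⟩
  induction h with
  | refl => exact hT
  | tail _ hstep ih => exact hstep.affineOn hf ih

lemma slack_hzD_dlD_eq_zero_of_reflTransGen {n : ℕ} {f : Flow} (hf : IsFlow n f) {m : ℕ}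
    (hm : m + 2 ≤ n) (h : ReflTransGen (FlatAdjTri n f) (.up m m) (.up (m + 1) (m + 1))) :
    slack f (.hzD m m) = 0 ∧ slack f (.dlD (m + 1) m) = 0 := by
  obtain ⟨a, b, c, hT, hT'⟩ := exists_affineOn_of_reflTransGen hf h
  have e₁ := hT m m (Or.inl rfl)
  have e₂ := hT (m + 1) m (Or.inr (Or.inl rfl))
  have e₃ := hT (m + 1) (m + 1) (Or.inr (Or.inr rfl))
  have e₄ := hT' (m + 2) (m + 1) (Or.inr (Or.inl rfl))
  have e₅ := hT' (m + 2) (m + 2) (Or.inr (Or.inr rfl))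
  rw [slack_hzD_eq hf le_rfl hm, slack_dlD_eq]
  push_cast at *
  constructor <;> linarith

lemma slack_drD_dlD_eq_zero_of_reflTransGen {n : ℕ} {f : Flow} (hf : IsFlow n f) {m i : ℕ}
    (h : ReflTransGen (FlatAdjTri n f) (.up m i) (.up m (i + 1))) :
    slack f (.drD m i) = 0 ∧ slack f (.dlD m i) = 0 := by
  obtain ⟨a, b, c, hT, hT'⟩ := exists_affineOn_of_reflTransGen hf h
  have e₁ := hT m i (Or.inl rfl)
  have e₂ := hT (m + 1) i (Or.inr (Or.inl rfl))
  have e₃ := hT (m + 1) (i + 1) (Or.inr (Or.inr rfl))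
  have e₄ := hT' m (i + 1) (Or.inl rfl)
  have e₅ := hT' (m + 1) (i + 2) (Or.inr (Or.inr rfl))
  rw [slack_drD_eq, slack_dlD_eq]
  push_cast at *
  constructor <;> linarith

section CompleteTurnpath

variable {A : RVertex → RVertex → Prop} {l : List RVertex}

lemma IsCompleteTP.nodup (hl : IsCompleteTP A l) : l.Nodup := by
  rcases hl with h | h | h
  exacts [h.1, h.1, h.2.1]

lemma IsCompleteTP.isChain (hl : IsCompleteTP A l) : l.IsChain A := by
  rcases hl with h | h | h
  exacts [h.2.1, h.2.1, h.2.2.1]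

/-- Cyclically consecutive vertices of a complete turnpath are adjacent, except for the
wrap-around step of an `s`-`t`- or `t`-`s`-turnpath, which joins `s` and `t`. -/
lemma IsCompleteTP.rel_prev (hl : IsCompleteTP A l) {y : RVertex} (hy : y ∈ l)
    (hturn : (∃ t, y = .turn t) ∨ ∃ t, l.prev y hy = .turn t) : A (l.prev y hy) y := by
  have hne : l ≠ [] := List.ne_nil_of_mem hy
  by_cases hhead : y = l.head hne
  · subst hhead
    rw [List.prev_head_eq_getLast l hne] at hturn ⊢
    rcases hl with ⟨-, -, h₁, h₂⟩ | ⟨-, -, h₁, h₂⟩ | ⟨-, -, -, hcycle⟩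
    any_goals
      rw [List.head?_eq_some_head hne, Option.some_inj] at h₁
      rw [List.getLast?_eq_some_getLast hne, Option.some_inj] at h₂
      rcases hturn with ⟨t, ht⟩ | ⟨t, ht⟩ <;> simp_all
    exact hcycle _ _ (List.getLast?_eq_some_getLast hne) (List.head?_eq_some_head hne)
  · exact List.isChain_pair.mp (hl.isChain.infix (List.prev_infix_of_mem_tail hy hhead))

lemma IsCompleteTP.rel_prev_turn (hl : IsCompleteTP A l) {t : Turn} (ht : .turn t ∈ l) :
    A (l.prev _ ht) (.turn t) :=
  hl.rel_prev ht (Or.inl ⟨t, rfl⟩)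

lemma IsCompleteTP.rel_next_turn (hl : IsCompleteTP A l) {t : Turn} (ht : .turn t ∈ l) :
    A (.turn t) (l.next _ ht) := by
  have hprev := List.prev_next l hl.nodup _ ht
  have := hl.rel_prev (List.next_mem l _ ht) (Or.inr ⟨t, hprev⟩)
  rwa [hprev] at this

lemma IsCompleteTP.eq_of_forall_pred_eq_src (hl : IsCompleteTP A l) {t₁ t₂ : Turn}
    (h₁ : .turn t₁ ∈ l) (h₂ : .turn t₂ ∈ l) (hs₁ : ∀ y, A y (.turn t₁) → y = .src)
    (hs₂ : ∀ y, A y (.turn t₂) → y = .src) : t₁ = t₂ := by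
  have e₁ := List.next_prev l hl.nodup _ h₁
  have e₂ := List.next_prev l hl.nodup _ h₂
  simp only [hs₁ _ (hl.rel_prev_turn h₁), hs₂ _ (hl.rel_prev_turn h₂)] at e₁ e₂
  exact RVertex.turn.inj (e₁.symm.trans e₂)

lemma IsCompleteTP.eq_of_forall_succ_eq_src (hl : IsCompleteTP A l) {t₁ t₂ : Turn}
    (h₁ : .turn t₁ ∈ l) (h₂ : .turn t₂ ∈ l) (hs₁ : ∀ y, A (.turn t₁) y → y = .src)
    (hs₂ : ∀ y, A (.turn t₂) y → y = .src) : t₁ = t₂ := by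
  have e₁ := List.prev_next l hl.nodup _ h₁
  have e₂ := List.prev_next l hl.nodup _ h₂
  simp only [hs₁ _ (hl.rel_next_turn h₁), hs₂ _ (hl.rel_next_turn h₂)] at e₁ e₂
  exact RVertex.turn.inj (e₁.symm.trans e₂)

end CompleteTurnpath

lemma sideOf_up_iff {e : EdgeK} {m i : ℕ} :
    sideOf e (.up m i) ↔ e = .dr m i ∨ e = .hz (m + 1) i ∨ e = .dl m i := by
  simp [sideOf, Tri.sides]

lemma sideOf_down_iff {e : EdgeK} {m i : ℕ} :
    sideOf e (.down m i) ↔ e = .hz m i ∨ e = .dl m (i + 1) ∨ e = .dr m i := by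
  simp [sideOf, Tri.sides]

lemma eq_upOf_or_dnOf?_eq_of_sideOf {e : EdgeK} {T : Tri} (h : sideOf e T) :
    T = upOf e ∨ dnOf? e = some T := by
  cases T <;> [rw [sideOf_up_iff] at h; rw [sideOf_down_iff] at h] <;>
    rcases h with rfl | rfl | rfl <;> simp [upOf, dnOf?]

lemma eq_or_eq_cwNext_of_sideOf {e e' : EdgeK} {T : Tri} (he : sideOf e T)
    (he' : sideOf e' T) : e' = e ∨ e' = cwNext T e ∨ e' = cwNext T (cwNext T e) := by
  cases T <;> [rw [sideOf_up_iff] at he he'; rw [sideOf_down_iff] at he he'] <;>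
    rcases he with rfl | rfl | rfl <;> rcases he' with rfl | rfl | rfl <;> simp [cwNext]

lemma cwNext_cwNext_ne_cwNext {e : EdgeK} {T : Tri} (he : sideOf e T) :
    cwNext T (cwNext T e) ≠ cwNext T e := by
  cases T <;> [rw [sideOf_up_iff] at he; rw [sideOf_down_iff] at he] <;>
    rcases he with rfl | rfl | rfl <;> simp [cwNext]

def OnRightOrBottom (n : ℕ) (e : EdgeK) : Prop := onRight n e ∨ onBottom n e

namespace OnRightOrBottom

variable {n : ℕ} {e : EdgeK}

lemma valid (he : OnRightOrBottom n e) : e.valid n := by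
  rcases he with ⟨m, hm, rfl⟩ | ⟨i, hi, rfl⟩ <;> simp only [EdgeK.valid] <;> omega

lemma upOf_valid (he : OnRightOrBottom n e) : (upOf e).valid n := by
  rcases he with ⟨m, hm, rfl⟩ | ⟨i, hi, rfl⟩ <;> simp only [upOf, Tri.valid] <;> omega

lemma sideOf_upOf (he : OnRightOrBottom n e) : sideOf e (upOf e) := by
  rcases he with ⟨m, hm, rfl⟩ | ⟨i, hi, rfl⟩
  · simp [sideOf, upOf, Tri.sides]
  · obtain ⟨n, rfl⟩ : ∃ k, n = k + 1 := ⟨n - 1, by omega⟩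
    simp [sideOf, upOf, Tri.sides]

lemma dnOf?_ne_some (he : OnRightOrBottom n e) {T : Tri} (hT : T.valid n) :
    dnOf? e ≠ some T := by
  rcases he with ⟨m, hm, rfl⟩ | ⟨i, hi, rfl⟩ <;> rintro ⟨⟩ <;> simp only [Tri.valid] at hT <;>
    omega

lemma eq_upOf_of_sideOf (he : OnRightOrBottom n e) {T : Tri} (hT : T.valid n)
    (h : sideOf e T) : T = upOf e :=
  (eq_upOf_or_dnOf?_eq_of_sideOf h).resolve_right (he.dnOf?_ne_some hT)

lemma not_onLeft (he : OnRightOrBottom n e) : ¬ onLeft n e := by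
  rintro ⟨k, -, rfl⟩
  rcases he with ⟨m, -, h⟩ | ⟨i, -, h⟩ <;> cases h

lemma borderEdge_iff (he : OnRightOrBottom n e) {L : Set Tri} :
    BorderEdge n L e ↔ upOf e ∈ L := by
  have hdn : ¬ dnIn n L e := fun ⟨_, hT, hTv, _⟩ => he.dnOf?_ne_some hTv hT
  simp [BorderEdge, inL, hdn, he.valid, he.upOf_valid]

end OnRightOrBottom

lemma finite_setOf_tri_valid (n : ℕ) : {T : Tri | T.valid n}.Finite := by
  have hbox := (Set.finite_Iic n).prod (Set.finite_Iic n)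
  refine ((hbox.image fun p => Tri.up p.1 p.2).union
    (hbox.image fun p => Tri.down p.1 p.2)).subset ?_
  rintro (⟨m, i⟩ | ⟨m, i⟩) ⟨hi, hm⟩
  · exact Or.inl ⟨(m, i), ⟨by simp; omega, by simp; omega⟩, rfl⟩
  · exact Or.inr ⟨(m, i), ⟨by simp; omega, by simp; omega⟩, rfl⟩

lemma finite_setOf_turn_valid (n : ℕ) : {t : Turn | t.valid n}.Finite := by
  have hT := finite_setOf_tri_valid n
  have hE : (⋃ T ∈ {T : Tri | T.valid n}, {e | sideOf e T}).Finite :=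
    hT.biUnion fun T _ => T.sides.finite_toSet
  refine ((hT.prod (hE.prod hE)).image fun x => Turn.mk x.1 x.2.1 x.2.2).subset ?_
  rintro ⟨T, e, e'⟩ ⟨hTv, he, he', -⟩
  exact ⟨(T, e, e'), ⟨hTv, Set.mem_biUnion hTv he, Set.mem_biUnion hTv he'⟩, rfl⟩

section Residual

variable {n : ℕ} {lam mu nu : ℕ → ℕ} {f : Flow} {l : List RVertex} {t : Turn}

lemma valid_of_residAdj_turn {y : RVertex} (h : ResidAdj n lam mu nu f y (.turn t)) :
    t.valid n := by
  cases y
  exacts [h.1.2.1, h.1.1, h.1.1]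

lemma not_delTurn_of_residAdj_turn {y : RVertex} (h : ResidAdj n lam mu nu f y (.turn t)) :
    ¬ DelTurn n f t := by
  cases y
  exacts [h.2.2.1, h.2.1, h.2.1]

lemma IsCompleteTP.valid_of_mem (hl : IsCompleteTP (ResidAdj n lam mu nu f) l)
    (ht : .turn t ∈ l) : t.valid n :=
  valid_of_residAdj_turn (hl.rel_prev_turn ht)

lemma IsCompleteTP.not_delTurn_of_mem (hl : IsCompleteTP (ResidAdj n lam mu nu f) l)
    (ht : .turn t ∈ l) : ¬ DelTurn n f t :=
  not_delTurn_of_residAdj_turn (hl.rel_prev_turn ht)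

lemma IsCompleteTP.exists_residAdj_next (hl : IsCompleteTP (ResidAdj n lam mu nu f) l)
    (ht : .turn t ∈ l) (hout : ¬ OnRightOrBottom n t.outE) (hleft : ¬ onLeft n t.outE) :
    ∃ t', ResidAdj n lam mu nu f (.turn t) (.turn t') := by
  have h := hl.rel_next_turn ht
  generalize l.next _ ht = y at h
  cases y with
  | turn t' => exact ⟨t', h⟩
  | src => exact absurd h.1.2 hout
  | tgt => exact absurd h.1.2 hleft

lemma IsCompleteTP.exists_residAdj_prev (hl : IsCompleteTP (ResidAdj n lam mu nu f) l)
    (ht : .turn t ∈ l) (hin : ¬ OnRightOrBottom n t.inE) (hleft : ¬ onLeft n t.inE) :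
    ∃ t', ResidAdj n lam mu nu f (.turn t') (.turn t) := by
  have h := hl.rel_prev_turn ht
  generalize l.prev _ ht = y at h
  cases y with
  | turn t' => exact ⟨t', h⟩
  | src => exact absurd h.1.2 hin
  | tgt => exact absurd h.1.2 hleft

lemma WeightedFamily.finite_support {φ : List RVertex → ℝ}
    (hφ : WeightedFamily (ResidAdj n lam mu nu f) φ) : φ.support.Finite := by
  refine (((finite_setOf_turn_valid n).image RVertex.turn).insert .src |>.insert .tgt
    |>.setOf_nodup).subset fun l hl => ?_
  have hc : IsCompleteTP _ l := by_contra fun hc => hl (hφ.2 l hc)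
  refine ⟨hc.nodup, fun x hx => ?_⟩
  cases x with
  | turn t => exact .inr (.inr ⟨t, hc.valid_of_mem hx, rfl⟩)
  | src => exact .inr (.inl rfl)
  | tgt => exact .inl rfl

lemma eq_src_of_residAdj_of_inE (he : OnRightOrBottom n t.inE) (htri : t.tri = upOf t.inE)
    {y : RVertex} (h : ResidAdj n lam mu nu f y (.turn t)) : y = .src := by
  cases y with
  | src => rfl
  | tgt => exact absurd h.1.2 he.not_onLeft
  | turn t' =>
    obtain ⟨⟨ht', -, hout, hne, -⟩, -⟩ := h
    exact absurd ((he.eq_upOf_of_sideOf ht'.1 (hout ▸ ht'.2.2.1)).trans htri.symm) hne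

lemma eq_src_of_residAdj_of_outE (he : OnRightOrBottom n t.outE) (htri : t.tri = upOf t.outE)
    {y : RVertex} (h : ResidAdj n lam mu nu f (.turn t) y) : y = .src := by
  cases y with
  | src => rfl
  | tgt => exact absurd h.1.2 he.not_onLeft
  | turn t' =>
    obtain ⟨⟨-, ht', hin, hne, -⟩, -⟩ := h
    exact absurd (htri.trans (he.eq_upOf_of_sideOf ht'.1 (hin ▸ ht'.2.1)).symm) hne

end Residual

def EntersAt (e : EdgeK) (l : List RVertex) : Prop :=
  ∃ t : Turn, .turn t ∈ l ∧ t.inE = e ∧ t.tri = upOf e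

def ExitsAt (e : EdgeK) (l : List RVertex) : Prop :=
  ∃ t : Turn, .turn t ∈ l ∧ t.outE = e ∧ t.tri = upOf e

noncomputable def enterWeight (φ : List RVertex → ℝ) (e : EdgeK) : ℝ :=
  ∑ᶠ l ∈ {l | EntersAt e l}, φ l

noncomputable def exitWeight (φ : List RVertex → ℝ) (e : EdgeK) : ℝ :=
  ∑ᶠ l ∈ {l | ExitsAt e l}, φ l

section Throughput

variable {n : ℕ} {lam mu nu : ℕ → ℕ} {f : Flow} {l : List RVertex} {e : EdgeK}

open Classical in
lemma pathDelta_eq_of_onRightOrBottom (he : OnRightOrBottom n e)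
    (hl : IsCompleteTP (ResidAdj n lam mu nu f) l) :
    pathDelta l e = (if EntersAt e l then 1 else 0) - (if ExitsAt e l then 1 else 0) := by
  simp only [pathDelta]
  set T := upOf e
  set e₁ := cwNext T e
  set e₂ := cwNext T e₁
  have hne : e₂ ≠ e₁ := cwNext_cwNext_ne_cwNext he.sideOf_upOf
  have henter : EntersAt e l ↔ .turn ⟨T, e, e₁⟩ ∈ l ∨ .turn ⟨T, e, e₂⟩ ∈ l := by
    refine ⟨fun ⟨⟨T', a, b⟩, ht, ha, hT'⟩ => ?_, by rintro (h | h) <;> exact ⟨_, h, rfl, rfl⟩⟩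
    dsimp only at ha hT'
    subst a T'
    have hv := hl.valid_of_mem ht
    rcases eq_or_eq_cwNext_of_sideOf (T := T) (e := e) (e' := b) hv.2.1 hv.2.2.1 with
      h | rfl | rfl
    exacts [absurd h.symm hv.2.2.2, .inl ht, .inr ht]
  have hexit : ExitsAt e l ↔ .turn ⟨T, e₁, e⟩ ∈ l ∨ .turn ⟨T, e₂, e⟩ ∈ l := by
    refine ⟨fun ⟨⟨T', a, b⟩, ht, hb, hT'⟩ => ?_, by rintro (h | h) <;> exact ⟨_, h, rfl, rfl⟩⟩
    dsimp only at hb hT'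
    subst b T'
    have hv := hl.valid_of_mem ht
    rcases eq_or_eq_cwNext_of_sideOf (T := T) (e := e) (e' := a) hv.2.2.1 hv.2.1 with
      h | rfl | rfl
    exacts [absurd h hv.2.2.2, .inl ht, .inr ht]
  have henter_once : ¬ (.turn ⟨T, e, e₁⟩ ∈ l ∧ .turn ⟨T, e, e₂⟩ ∈ l) := fun ⟨h₁, h₂⟩ =>
    hne (congrArg Turn.outE (hl.eq_of_forall_pred_eq_src h₁ h₂
      (fun _ => eq_src_of_residAdj_of_inE he rfl) fun _ => eq_src_of_residAdj_of_inE he rfl)).symm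
  have hexit_once : ¬ (.turn ⟨T, e₁, e⟩ ∈ l ∧ .turn ⟨T, e₂, e⟩ ∈ l) := fun ⟨h₁, h₂⟩ =>
    hne (congrArg Turn.inE (hl.eq_of_forall_succ_eq_src h₁ h₂
      (fun _ => eq_src_of_residAdj_of_outE he rfl) fun _ => eq_src_of_residAdj_of_outE he rfl)).symm
  rw [henter, hexit]
  split_ifs <;> simp_all

lemma wDelta_eq_enterWeight_sub_exitWeight {φ : List RVertex → ℝ}
    (hφ : WeightedFamily (ResidAdj n lam mu nu f) φ) (he : OnRightOrBottom n e) :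
    wDelta φ e = enterWeight φ e - exitWeight φ e := by
  classical
  have hfin (s : Set (List RVertex)) : (s.indicator φ).support.Finite :=
    hφ.finite_support.subset (by rw [Set.support_indicator]; exact Set.inter_subset_right)
  rw [enterWeight, exitWeight, finsum_mem_def, finsum_mem_def,
    ← finsum_sub_distrib (hfin _) (hfin _), wDelta]
  refine finsum_congr fun l => ?_
  by_cases hl : IsCompleteTP (ResidAdj n lam mu nu f) l
  · rw [pathDelta_eq_of_onRightOrBottom he hl]
    simp only [Set.indicator_apply, Set.mem_ofPred_eq]
    split_ifs <;> ring
  · simp [Set.indicator_apply, hφ.2 l hl]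

end Throughput

section Side

variable {n : ℕ} {lam mu nu : ℕ → ℕ} {f : Flow} {φ : List RVertex → ℝ}

lemma enterWeight_eq_zero {A : RVertex → RVertex → Prop} (hφ : WeightedFamily A φ)
    {e : EdgeK} (h : ∀ l, IsCompleteTP A l → ¬ EntersAt e l) : enterWeight φ e = 0 :=
  finsum_mem_eq_zero_of_forall_eq_zero fun l hl =>
    by_contra fun hφl => h l (by_contra fun hc => hφl (hφ.2 l hc)) hl

lemma exitWeight_eq_zero {A : RVertex → RVertex → Prop} (hφ : WeightedFamily A φ)
    {e : EdgeK} (h : ∀ l, IsCompleteTP A l → ¬ ExitsAt e l) : exitWeight φ e = 0 :=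
  finsum_mem_eq_zero_of_forall_eq_zero fun l hl =>
    by_contra fun hφl => h l (by_contra fun hc => hφl (hφ.2 l hc)) hl

lemma inWeight_eq_enterWeight (hφ : WeightedFamily (ResidAdj n lam mu nu f) φ) {L : Set Tri}
    {s : List EdgeK} {e₀ : EdgeK} (he₀ : OnRightOrBottom n e₀) (hL : upOf e₀ ∈ L)
    (hentr : ∀ e, entranceOf n L s e ↔ e = e₀) : inWeight n L s φ = enterWeight φ e₀ := by
  refine finsum_mem_inter_support_eq _ _ _ (Set.ext fun l => and_congr_left fun hφl => ?_)
  have hl : IsCompleteTP _ l := by_contra fun hc => hφl (hφ.2 l hc)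
  simp only [Set.mem_ofPred_eq, EntersVia, EntersAt, hentr, exists_eq_left]
  refine exists_congr fun t => and_congr_right fun ht => and_congr_right fun hin => ?_
  have hv := hl.valid_of_mem ht
  exact ⟨fun _ => he₀.eq_upOf_of_sideOf hv.1 (hin ▸ hv.2.1),
    fun h => h ▸ ⟨he₀.upOf_valid, hL⟩⟩

lemma outWeight_eq_exitWeight (hφ : WeightedFamily (ResidAdj n lam mu nu f) φ) {L : Set Tri}
    {s : List EdgeK} {e₁ : EdgeK} (he₁ : OnRightOrBottom n e₁) (hL : upOf e₁ ∈ L)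
    (hexit : ∀ e, exitOf n L s e ↔ e = e₁) : outWeight n L s φ = exitWeight φ e₁ := by
  refine finsum_mem_inter_support_eq _ _ _ (Set.ext fun l => and_congr_left fun hφl => ?_)
  have hl : IsCompleteTP _ l := by_contra fun hc => hφl (hφ.2 l hc)
  simp only [Set.mem_ofPred_eq, ExitsVia, ExitsAt, hexit, exists_eq_left]
  refine exists_congr fun t => and_congr_right fun ht => and_congr_right fun hout => ?_
  have hv := hl.valid_of_mem ht
  exact ⟨fun _ => he₁.eq_upOf_of_sideOf hv.1 (hout ▸ hv.2.2.1),
    fun h => h ▸ ⟨he₁.upOf_valid, hL⟩⟩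

lemma sum_map_thru_eq_inSide_sub_outSide {L : Set Tri} {s : List EdgeK} (d : Flow)
    (hs : ∀ e ∈ s, inL n L (upOf e)) :
    (s.map d.thru).sum = inSide n L d s - outSide n L d s := by
  induction s with
  | nil => simp [inSide, outSide]
  | cons e s ih =>
    simp only [inSide, outSide, List.map_cons, List.sum_cons] at ih ⊢
    rw [ih fun e' he' => hs e' (List.mem_cons_of_mem e he'), inPosEdge, outPosEdge, inflowEdge,
      if_pos (hs e List.mem_cons_self)]
    linarith [max_zero_sub_max_neg_zero_eq_self (d.thru e)]

theorem sum_map_wDelta_eq_sum_map_thru (hφ : WeightedFamily (ResidAdj n lam mu nu f) φ)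
    {L : Set Tri} {s : List EdgeK} {d : Flow} {e₀ e₁ : EdgeK} (hs : s.Nodup)
    (hsL : ∀ e ∈ s, OnRightOrBottom n e ∧ upOf e ∈ L) (he₀ : e₀ ∈ s) (he₁ : e₁ ∈ s)
    (hentr : ∀ e, entranceOf n L s e ↔ e = e₀) (hexit : ∀ e, exitOf n L s e ↔ e = e₁)
    (hin : inWeight n L s φ = inSide n L d s) (hout : outWeight n L s φ = outSide n L d s)
    (hblock_in : ∀ e ∈ s, e ≠ e₀ →
      ∀ l, IsCompleteTP (ResidAdj n lam mu nu f) l → ¬ EntersAt e l)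
    (hblock_out : ∀ e ∈ s, e ≠ e₁ →
      ∀ l, IsCompleteTP (ResidAdj n lam mu nu f) l → ¬ ExitsAt e l) :
    (s.map (wDelta φ)).sum = (s.map d.thru).sum := by
  classical
  calc (s.map (wDelta φ)).sum
      = ∑ e ∈ s.toFinset, enterWeight φ e - ∑ e ∈ s.toFinset, exitWeight φ e := by
        rw [← sum_sub_distrib, List.sum_toFinset _ hs]
        exact congrArg _ (List.map_congr_left fun e he =>
          wDelta_eq_enterWeight_sub_exitWeight hφ (hsL e he).1)
    _ = enterWeight φ e₀ - exitWeight φ e₁ := by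
        rw [sum_eq_single_of_mem e₀ (List.mem_toFinset.2 he₀) fun e he hne =>
            enterWeight_eq_zero hφ (hblock_in e (List.mem_toFinset.1 he) hne),
          sum_eq_single_of_mem e₁ (List.mem_toFinset.2 he₁) fun e he hne =>
            exitWeight_eq_zero hφ (hblock_out e (List.mem_toFinset.1 he) hne)]
    _ = (s.map d.thru).sum := by
        rw [← inWeight_eq_enterWeight hφ (hsL e₀ he₀).1 (hsL e₀ he₀).2 hentr,
          ← outWeight_eq_exitWeight hφ (hsL e₁ he₁).1 (hsL e₁ he₁).2 hexit, hin, hout,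
          sum_map_thru_eq_inSide_sub_outSide d fun e he =>
            ⟨(hsL e he).1.upOf_valid, (hsL e he).2⟩]

end Side

section Blocking

variable {n m i : ℕ} {lam mu nu : ℕ → ℕ} {f : Flow} {l : List RVertex}

/-- Of the two turns entering through the border edge, one is the counterclockwise acute turn
of a flat rhombus; the other leads into the downright triangle between the two upright ones,
and every way out of that triangle is a deleted turn or turnedge. -/
lemma not_entersAt_dr_succ (hm : m + 2 ≤ n) (hflat₁ : slack f (.hzD m m) = 0)
    (hflat₂ : slack f (.dlD (m + 1) m) = 0) (hl : IsCompleteTP (ResidAdj n lam mu nu f) l) :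
    ¬ EntersAt (.dr (m + 1) (m + 1)) l := by
  rintro ⟨⟨T, e₁, e₂⟩, ht, h₁, h₂⟩
  dsimp only [upOf] at h₁ h₂
  subst e₁ T
  have hv := hl.valid_of_mem ht
  rcases sideOf_up_iff.1 hv.2.2.1 with h | rfl | rfl
  · exact hv.2.2.2 h.symm
  · exact hl.not_delTurn_of_mem ht ⟨.dlD (m + 1) m, ⟨le_rfl, by omega⟩, hflat₂, 0,
      by simp [negContrib, Rhombus.triU, Rhombus.diag, cwNext]⟩
  · obtain ⟨⟨T', e₁', e₂'⟩, ⟨-, hv', hout, hne, -⟩, -, hdel', hdeledge⟩ :=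
      hl.exists_residAdj_next ht (by rintro (⟨_, -, ⟨⟩⟩ | ⟨_, -, ⟨⟩⟩))
        (by rintro ⟨_, -, h⟩; cases h)
    dsimp only at hout hne
    subst e₁'
    obtain rfl : .down (m + 1) m = T' := by
      simpa [upOf, dnOf?, hne.symm] using eq_upOf_or_dnOf?_eq_of_sideOf hv'.2.1
    rcases sideOf_down_iff.1 hv'.2.2.1 with rfl | h | rfl
    · exact hdeledge ⟨.dlD (m + 1) m, ⟨le_rfl, by omega⟩, hflat₂, 2,
        by simp [negContrib, Rhombus.triU, Rhombus.triD, Rhombus.diag, cwNext]⟩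
    · exact hv'.2.2.2 h.symm
    · exact hdel' ⟨.hzD m m, ⟨le_rfl, hm⟩, hflat₁, 1,
        by simp [negContrib, Rhombus.triU, Rhombus.triD, Rhombus.diag, cwNext]⟩

lemma not_exitsAt_dr (hm : m + 2 ≤ n) (hflat₁ : slack f (.hzD m m) = 0)
    (hflat₂ : slack f (.dlD (m + 1) m) = 0) (hl : IsCompleteTP (ResidAdj n lam mu nu f) l) :
    ¬ ExitsAt (.dr m m) l := by
  rintro ⟨⟨T, e₁, e₂⟩, ht, h₁, h₂⟩
  dsimp only [upOf] at h₁ h₂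
  subst e₂ T
  have hv := hl.valid_of_mem ht
  rcases sideOf_up_iff.1 hv.2.1 with h | rfl | rfl
  · exact hv.2.2.2 h
  · obtain ⟨⟨T', e₁', e₂'⟩, ⟨hv', -, hout, hne, -⟩, hdel', -, hdeledge⟩ :=
      hl.exists_residAdj_prev ht (by rintro (⟨_, -, ⟨⟩⟩ | ⟨_, -, h⟩); injection h; omega)
        (by rintro ⟨_, -, ⟨⟩⟩)
    dsimp only at hout hne
    subst e₂'
    obtain rfl : .down (m + 1) m = T' := by
      simpa [upOf, dnOf?, hne] using eq_upOf_or_dnOf?_eq_of_sideOf hv'.2.2.1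
    rcases sideOf_down_iff.1 hv'.2.1 with h | rfl | rfl
    · exact hv'.2.2.2 h
    · exact hdeledge ⟨.hzD m m, ⟨le_rfl, hm⟩, hflat₁, 3,
        by simp [negContrib, Rhombus.triU, Rhombus.triD, Rhombus.diag, cwNext]⟩
    · exact hdel' ⟨.dlD (m + 1) m, ⟨le_rfl, by omega⟩, hflat₂, 1,
        by simp [negContrib, Rhombus.triU, Rhombus.triD, Rhombus.diag, cwNext]⟩
  · exact hl.not_delTurn_of_mem ht ⟨.hzD m m, ⟨le_rfl, hm⟩, hflat₁, 0,
      by simp [negContrib, Rhombus.triU, Rhombus.diag, cwNext]⟩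

lemma not_entersAt_hz (hi : i + 1 ≤ m) (hm : m + 1 ≤ n) (hflat₁ : slack f (.drD m i) = 0)
    (hflat₂ : slack f (.dlD m i) = 0) (hl : IsCompleteTP (ResidAdj n lam mu nu f) l) :
    ¬ EntersAt (.hz (m + 1) i) l := by
  rintro ⟨⟨T, e₁, e₂⟩, ht, h₁, h₂⟩
  simp only [upOf, Nat.add_sub_cancel] at h₁ h₂
  subst e₁ T
  have hv := hl.valid_of_mem ht
  rcases sideOf_up_iff.1 hv.2.2.1 with rfl | h | rfl
  · obtain ⟨⟨T', e₁', e₂'⟩, ⟨-, hv', hout, hne, -⟩, -, hdel', hdeledge⟩ :=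
      hl.exists_residAdj_next ht (by rintro (⟨_, -, h⟩ | ⟨_, -, ⟨⟩⟩); injection h; omega)
        (by rintro ⟨_, -, ⟨⟩⟩)
    dsimp only at hout hne
    subst e₁'
    obtain rfl : .down m i = T' := by
      simpa [upOf, dnOf?, hne.symm] using eq_upOf_or_dnOf?_eq_of_sideOf hv'.2.1
    rcases sideOf_down_iff.1 hv'.2.2.1 with rfl | rfl | h
    · exact hdel' ⟨.dlD m i, ⟨hi, hm⟩, hflat₂, 1,
        by simp [negContrib, Rhombus.triU, Rhombus.triD, Rhombus.diag, cwNext]⟩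
    · exact hdeledge ⟨.drD m i, ⟨hi, hm⟩, hflat₁, 2,
        by simp [negContrib, Rhombus.triU, Rhombus.triD, Rhombus.diag, cwNext]⟩
    · exact hv'.2.2.2 h.symm
  · exact hv.2.2.2 h.symm
  · exact hl.not_delTurn_of_mem ht ⟨.drD m i, ⟨hi, hm⟩, hflat₁, 0,
      by simp [negContrib, Rhombus.triU, Rhombus.diag, cwNext]⟩

lemma not_exitsAt_hz_succ (hi : i + 1 ≤ m) (hm : m + 1 ≤ n) (hflat₁ : slack f (.drD m i) = 0)
    (hflat₂ : slack f (.dlD m i) = 0) (hl : IsCompleteTP (ResidAdj n lam mu nu f) l) :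
    ¬ ExitsAt (.hz (m + 1) (i + 1)) l := by
  rintro ⟨⟨T, e₁, e₂⟩, ht, h₁, h₂⟩
  simp only [upOf, Nat.add_sub_cancel] at h₁ h₂
  subst e₂ T
  have hv := hl.valid_of_mem ht
  rcases sideOf_up_iff.1 hv.2.1 with rfl | h | rfl
  · exact hl.not_delTurn_of_mem ht ⟨.dlD m i, ⟨hi, hm⟩, hflat₂, 0,
      by simp [negContrib, Rhombus.triU, Rhombus.diag, cwNext]⟩
  · exact hv.2.2.2 h
  · obtain ⟨⟨T', e₁', e₂'⟩, ⟨hv', -, hout, hne, -⟩, hdel', -, hdeledge⟩ :=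
      hl.exists_residAdj_prev ht (by rintro (⟨_, -, ⟨⟩⟩ | ⟨_, -, ⟨⟩⟩))
        (by rintro ⟨_, -, h⟩; cases h)
    dsimp only at hout hne
    subst e₂'
    obtain rfl : .down m i = T' := by
      simpa [upOf, dnOf?, hne] using eq_upOf_or_dnOf?_eq_of_sideOf hv'.2.2.1
    rcases sideOf_down_iff.1 hv'.2.1 with rfl | h | rfl
    · exact hdel' ⟨.drD m i, ⟨hi, hm⟩, hflat₁, 1,
        by simp [negContrib, Rhombus.triU, Rhombus.triD, Rhombus.diag, cwNext]⟩
    · exact hv'.2.2.2 h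
    · exact hdeledge ⟨.dlD m i, ⟨hi, hm⟩, hflat₂, 3,
        by simp [negContrib, Rhombus.triU, Rhombus.triD, Rhombus.diag, cwNext]⟩

end Blocking

def flatspaceOf (n : ℕ) (f : Flow) (T : Tri) : Set Tri :=
  {T' | ReflTransGen (FlatAdjTri n f) T T'}

/-- `e 0, …, e (n - 1)` are the edges of the right or of the bottom border of `Δ`, in
`lineSucc` order. -/
structure IsBorderLine (n : ℕ) (e : ℕ → EdgeK) : Prop where
  injective : Function.Injective e
  onRightOrBottom : ∀ k < n, OnRightOrBottom n (e k)
  not_valid : ¬ (e n).valid n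
  lineSucc_eq : ∀ k, lineSucc (e k) = e (k + 1)
  exists_eq_of_lineSucc_eq : ∀ x k, lineSucc x = e k → ∃ j, k = j + 1 ∧ x = e j

lemma isBorderLine_right (n : ℕ) : IsBorderLine n fun k => .dr k k where
  injective _ _ h := by injection h
  onRightOrBottom k hk := .inl ⟨k, hk, rfl⟩
  not_valid h := by simp only [EdgeK.valid] at h; omega
  lineSucc_eq _ := rfl
  exists_eq_of_lineSucc_eq x k h := by
    cases x <;> simp only [lineSucc, reduceCtorEq, EdgeK.dr.injEq] at h
    exact ⟨_, h.1.symm, by rw [← Nat.succ_inj.mp (h.1.trans h.2.symm)]⟩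

lemma isBorderLine_bottom (n : ℕ) : IsBorderLine n fun k => .hz n k where
  injective _ _ h := by injection h
  onRightOrBottom k hk := .inr ⟨k, hk, rfl⟩
  not_valid h := by simp only [EdgeK.valid] at h; omega
  lineSucc_eq _ := rfl
  exists_eq_of_lineSucc_eq x k h := by
    cases x <;> simp only [lineSucc, reduceCtorEq, EdgeK.hz.injEq] at h
    exact ⟨_, h.2.symm, by rw [h.1]⟩

def runList (e : ℕ → EdgeK) (a b : ℕ) : List EdgeK := (List.range' a (b + 1 - a)).map e

section Run

variable {n a b : ℕ} {lam mu nu : ℕ → ℕ} {f d : Flow} {φ : List RVertex → ℝ}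
  {e : ℕ → EdgeK}

lemma mem_runList {x : EdgeK} : x ∈ runList e a b ↔ ∃ k, a ≤ k ∧ k ≤ b ∧ e k = x := by
  simp only [runList, List.mem_map, List.mem_range'_1]
  exact exists_congr fun k =>
    ⟨fun ⟨⟨h₁, h₂⟩, h₃⟩ => ⟨h₁, by omega, h₃⟩, fun ⟨h₁, h₂, h₃⟩ => ⟨⟨h₁, by omega⟩, h₃⟩⟩

lemma head?_runList (hab : a ≤ b) : (runList e a b).head? = some (e a) := by
  obtain ⟨c, hc⟩ : ∃ c, b + 1 - a = c + 1 := ⟨b - a, by omega⟩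
  simp [runList, hc, List.range'_succ]

lemma getLast?_runList (hab : a ≤ b) : (runList e a b).getLast? = some (e b) := by
  obtain ⟨c, hc⟩ : ∃ c, b + 1 - a = c + 1 := ⟨b - a, by omega⟩
  rw [runList, List.getLast?_map, hc, List.range'_concat]
  simp only [List.getLast?_append, List.getLast?_singleton, Option.some_or, Option.map_some,
    Option.some_inj]
  congr 1
  omega

lemma sum_map_runList {M : Type*} [AddCommMonoid M] (g : EdgeK → M) :
    ((runList e a b).map g).sum = ∑ k ∈ Icc a b, g (e k) := by
  simp [runList, Nat.Icc_eq_range', Finset.sum, Function.comp_def]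

namespace IsBorderLine

lemma nodup_runList (he : IsBorderLine n e) : (runList e a b).Nodup :=
  (List.nodup_range' (s := a) (n := b + 1 - a)).map he.injective

lemma isSide_runList (he : IsBorderLine n e) {L : Set Tri} (hab : a ≤ b) (hbn : b < n)
    (hmem : ∀ k, a ≤ k → k ≤ b → upOf (e k) ∈ L) (hbefore : ∀ j, a = j + 1 → upOf (e j) ∉ L)
    (hafter : b + 1 < n → upOf (e (b + 1)) ∉ L) : IsSide n L (runList e a b) := by
  refine ⟨fun h => by simpa [h] using head?_runList (e := e) hab, fun x hx => ?_, ?_,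
    fun x y hy hxy => ?_, fun y hy => ?_⟩
  · obtain ⟨k, hak, hkb, rfl⟩ := mem_runList.1 hx
    exact (he.onRightOrBottom k (by omega)).borderEdge_iff.2 (hmem k hak hkb)
  · rw [runList, List.Chain', List.isChain_map]
    exact (List.isChain_range' a _ 1).imp fun x y h => by rw [h, he.lineSucc_eq]
  · rw [head?_runList (e := e) hab, Option.some_inj] at hy
    obtain ⟨j, rfl, rfl⟩ := he.exists_eq_of_lineSucc_eq x _ (hxy.trans hy.symm)
    rw [(he.onRightOrBottom j (by omega)).borderEdge_iff]
    exact hbefore j rfl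
  · rw [getLast?_runList (e := e) hab, Option.some_inj] at hy
    subst hy
    rw [he.lineSucc_eq]
    rcases Nat.lt_or_ge (b + 1) n with hb | hb
    · rw [(he.onRightOrBottom _ hb).borderEdge_iff]
      exact hafter hb
    · obtain rfl : b + 1 = n := by omega
      exact fun h => he.not_valid h.1

theorem sum_wDelta_eq_of_maximal_run (he : IsBorderLine n e)
    (hφ : WeightedFamily (ResidAdj n lam mu nu f) φ)
    (hcompat : ∀ (L : Set Tri) (s : List EdgeK), IsFlatspace n f L → IsSide n L s →
      inWeight n L s φ = inSide n L d s ∧ outWeight n L s φ = outSide n L d s)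
    (hab : a ≤ b) (hbn : b < n)
    (hstart : ∀ j, a = j + 1 → upOf (e (j + 1)) ∉ flatspaceOf n f (upOf (e j)))
    (hlink : ∀ k, a ≤ k → k < b → upOf (e (k + 1)) ∈ flatspaceOf n f (upOf (e k)))
    (hend : b + 1 < n → upOf (e (b + 1)) ∉ flatspaceOf n f (upOf (e b)))
    {kin kout : ℕ} (hkin : a ≤ kin ∧ kin ≤ b) (hkout : a ≤ kout ∧ kout ≤ b)
    (hentr : ∀ L : Set Tri, upOf (e a) ∈ L →
      ∀ x, entranceOf n L (runList e a b) x ↔ x = e kin)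
    (hexit : ∀ L : Set Tri, upOf (e a) ∈ L → ∀ x, exitOf n L (runList e a b) x ↔ x = e kout)
    (hblock_in : ∀ k, a ≤ k → k ≤ b → k ≠ kin →
      ∀ l, IsCompleteTP (ResidAdj n lam mu nu f) l → ¬ EntersAt (e k) l)
    (hblock_out : ∀ k, a ≤ k → k ≤ b → k ≠ kout →
      ∀ l, IsCompleteTP (ResidAdj n lam mu nu f) l → ¬ ExitsAt (e k) l) :
    ∑ k ∈ Icc a b, wDelta φ (e k) = ∑ k ∈ Icc a b, d.thru (e k) := by
  set L := flatspaceOf n f (upOf (e a))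
  have hmem : ∀ k, a ≤ k → k ≤ b → upOf (e k) ∈ L := by
    intro k hak hkb
    induction k, hak using Nat.le_induction with
    | base => exact ReflTransGen.refl
    | succ k hak ih => exact ReflTransGen.trans (ih (by omega)) (hlink k hak (by omega))
  have hbefore : ∀ j, a = j + 1 → upOf (e j) ∉ L := by
    rintro j rfl hj
    exact hstart j rfl (Std.Symm.symm _ _ hj)
  have hafter : b + 1 < n → upOf (e (b + 1)) ∉ L := fun hb hL =>
    hend hb (ReflTransGen.trans (Std.Symm.symm _ _ (hmem b hab le_rfl)) hL)
  obtain ⟨hin, hout⟩ := hcompat L _ ⟨_, (he.onRightOrBottom a (by omega)).upOf_valid, rfl⟩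
    (he.isSide_runList hab hbn hmem hbefore hafter)
  have hmem_run {k : ℕ} (hak : a ≤ k) (hkb : k ≤ b) : e k ∈ runList e a b :=
    mem_runList.2 ⟨k, hak, hkb, rfl⟩
  rw [← sum_map_runList (wDelta φ), ← sum_map_runList d.thru]
  refine sum_map_wDelta_eq_sum_map_thru hφ he.nodup_runList (fun x hx => ?_)
    (hmem_run hkin.1 hkin.2) (hmem_run hkout.1 hkout.2) (hentr L (hmem a le_rfl hab))
    (hexit L (hmem a le_rfl hab)) hin hout (fun x hx hne => ?_) (fun x hx hne => ?_) <;>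
  obtain ⟨k, hak, hkb, rfl⟩ := mem_runList.1 hx
  · exact ⟨he.onRightOrBottom k (by omega), hmem k hak hkb⟩
  · exact hblock_in k hak hkb (by rintro rfl; exact hne rfl)
  · exact hblock_out k hak hkb (by rintro rfl; exact hne rfl)

end IsBorderLine

theorem sum_wDelta_dr_eq_of_maximal_run (hf : IsFlow n f)
    (hφ : WeightedFamily (ResidAdj n lam mu nu f) φ)
    (hcompat : ∀ (L : Set Tri) (s : List EdgeK), IsFlatspace n f L → IsSide n L s →
      inWeight n L s φ = inSide n L d s ∧ outWeight n L s φ = outSide n L d s)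
    (hab : a ≤ b) (hbn : b < n)
    (hstart : ∀ j, a = j + 1 → .up (j + 1) (j + 1) ∉ flatspaceOf n f (.up j j))
    (hlink : ∀ k, a ≤ k → k < b → .up (k + 1) (k + 1) ∈ flatspaceOf n f (.up k k))
    (hend : b + 1 < n → .up (b + 1) (b + 1) ∉ flatspaceOf n f (.up b b)) :
    ∑ k ∈ Icc a b, wDelta φ (.dr k k) = ∑ k ∈ Icc a b, d.dr k k := by
  have hcw (L : Set Tri) (hL : Tri.up a a ∈ L) : sideCW n L (runList (fun k => .dr k k) a b) :=
    ⟨_, head?_runList hab, ⟨le_rfl, by omega⟩, hL⟩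
  refine (isBorderLine_right n).sum_wDelta_eq_of_maximal_run hφ hcompat hab hbn hstart hlink
    hend ⟨le_rfl, hab⟩ ⟨hab, le_rfl⟩ (fun L hL x => ?_) (fun L hL x => ?_)
    (fun k hak hkb hne l hl => ?_) (fun k hak hkb hne l hl => ?_)
  · simp [entranceOf, hcw L hL, head?_runList hab, eq_comm]
  · simp [exitOf, hcw L hL, getLast?_runList hab, eq_comm]
  · obtain ⟨j, rfl⟩ : ∃ j, k = j + 1 := ⟨k - 1, by omega⟩
    obtain ⟨hflat₁, hflat₂⟩ :=
      slack_hzD_dlD_eq_zero_of_reflTransGen hf (by omega) (hlink j (by omega) (by omega))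
    exact not_entersAt_dr_succ (by omega) hflat₁ hflat₂ hl
  · obtain ⟨hflat₁, hflat₂⟩ :=
      slack_hzD_dlD_eq_zero_of_reflTransGen hf (by omega) (hlink k hak (by omega))
    exact not_exitsAt_dr (by omega) hflat₁ hflat₂ hl

theorem sum_wDelta_hz_eq_of_maximal_run (hf : IsFlow n f)
    (hφ : WeightedFamily (ResidAdj n lam mu nu f) φ)
    (hcompat : ∀ (L : Set Tri) (s : List EdgeK), IsFlatspace n f L → IsSide n L s →
      inWeight n L s φ = inSide n L d s ∧ outWeight n L s φ = outSide n L d s)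
    (hab : a ≤ b) (hbn : b < n)
    (hstart : ∀ j, a = j + 1 → .up (n - 1) (j + 1) ∉ flatspaceOf n f (.up (n - 1) j))
    (hlink : ∀ k, a ≤ k → k < b → .up (n - 1) (k + 1) ∈ flatspaceOf n f (.up (n - 1) k))
    (hend : b + 1 < n → .up (n - 1) (b + 1) ∉ flatspaceOf n f (.up (n - 1) b)) :
    ∑ k ∈ Icc a b, wDelta φ (.hz n k) = ∑ k ∈ Icc a b, d.hz n k := by
  have hccw (L : Set Tri) : ¬ sideCW n L (runList (fun k => .hz n k) a b) := by
    rintro ⟨x, hx, hdn⟩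
    rw [head?_runList hab, Option.some_inj] at hx
    subst hx
    obtain ⟨T, hT, hTv, -⟩ := hdn
    exact ((isBorderLine_bottom n).onRightOrBottom a (by omega)).dnOf?_ne_some hTv hT
  obtain ⟨m, rfl⟩ : ∃ m, n = m + 1 := ⟨n - 1, by omega⟩
  refine (isBorderLine_bottom _).sum_wDelta_eq_of_maximal_run hφ hcompat hab hbn hstart hlink
    hend ⟨hab, le_rfl⟩ ⟨le_rfl, hab⟩ (fun L _ x => ?_) (fun L _ x => ?_)
    (fun k hak hkb hne l hl => ?_) (fun k hak hkb hne l hl => ?_)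
  · simp [entranceOf, hccw L, getLast?_runList hab, eq_comm]
  · simp [exitOf, hccw L, head?_runList hab, eq_comm]
  · obtain ⟨hflat₁, hflat₂⟩ :=
      slack_drD_dlD_eq_zero_of_reflTransGen hf (hlink k hak (by omega))
    exact not_entersAt_hz (by omega) le_rfl hflat₁ hflat₂ hl
  · obtain ⟨j, rfl⟩ : ∃ j, k = j + 1 := ⟨k - 1, by omega⟩
    obtain ⟨hflat₁, hflat₂⟩ :=
      slack_drD_dlD_eq_zero_of_reflTransGen hf (hlink j (by omega) (by omega))
    exact not_exitsAt_hz_succ (by omega) le_rfl hflat₁ hflat₂ hl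

end Run

theorem rerouted_flow_same_throughput_general (n : ℕ) (lam mu nu : ℕ → ℕ)
    (f : Flow) (hf : MemB n lam mu nu f)
    (d : Flow)
    (φ : List RVertex → ℝ) (hφ : WeightedFamily (ResidAdj n lam mu nu f) φ)
    (hcompat : ∀ (L : Set Tri) (s : List EdgeK), IsFlatspace n f L → IsSide n L s →
      inWeight n L s φ = inSide n L d s ∧ outWeight n L s φ = outSide n L d s) :
    piThr n φ = thr n d := by
  have hflow : IsFlow n f := hf.2.1.1
  rw [piThr, thr]
  congr 1
  · exact sum_range_eq_of_forall_maximal_run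
      (fun k => .up (k + 1) (k + 1) ∈ flatspaceOf n f (.up k k))
      fun a b hab hbn hstart hlink hend =>
        sum_wDelta_dr_eq_of_maximal_run hflow hφ hcompat hab hbn hstart hlink hend
  · exact sum_range_eq_of_forall_maximal_run
      (fun k => .up (n - 1) (k + 1) ∈ flatspaceOf n f (.up (n - 1) k))
      fun a b hab hbn hstart hlink hend =>
        sum_wDelta_hz_eq_of_maximal_run hflow hφ hcompat hab hbn hstart hlink hend

/-- If `φ` is a weighted family of complete turnpaths in `R_f` whose entrance
and exit weights through every side of every `f`-flatspace agree with the
inflow and outflow of the `f`-hive preserving flow class `d`, then the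
nonnegative flow `d' = ∑_p φ(p)·p` on `R_f` satisfies `δ(π(d')) = δ(d)`. -/
theorem rerouted_flow_same_throughput (n : ℕ) (hn : 1 ≤ n) (lam mu nu : ℕ → ℕ)
    (hpart : PartitionData n lam mu nu)
    (f : Flow) (hf : MemB n lam mu nu f)
    (d : Flow) (hd0 : Normalized n d) (hd1 : IsFlow n d)
    (hd : HivePreserving n lam mu nu f d)
    (φ : List RVertex → ℝ) (hφ : WeightedFamily (ResidAdj n lam mu nu f) φ)
    (hcompat : ∀ (L : Set Tri) (s : List EdgeK), IsFlatspace n f L → IsSide n L s →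
      inWeight n L s φ = inSide n L d s ∧ outWeight n L s φ = outSide n L d s) :
    piThr n φ = thr n d :=
  rerouted_flow_same_throughput_general n lam mu nu f hf d φ hφ hcompat

end LRFlows
end

section
/- Let h be a hive on the triangular graph Δ with parameter n and let x ∈ V(Δ). Then min_{v ∈ ∂Δ} h(v) ≤ h(x) ≤ n · max_{v ∈ ∂Δ} h(v), where ∂Δ denotes the set of vertices of Δ lying on the boundary of the big triangle. -/
namespace LRFlows

/-- Telescoping: if all steps from `a` up to `m` are nondecreasing, `g a ≤ g m`. -/
private lemma chain_le_aux (g : ℕ → ℝ) :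
    ∀ a m, a ≤ m → (∀ r, a ≤ r → r < m → g r ≤ g (r + 1)) → g a ≤ g m := by
  intro a m
  induction m with
  | zero =>
      intro ham _
      have : a = 0 := Nat.le_zero.mp ham
      simp [this]
  | succ k ih =>
      intro ham H
      rcases Nat.lt_or_ge a (k + 1) with hlt | hge
      · have hak : a ≤ k := Nat.lt_succ_iff.mp hlt
        exact le_trans (ih hak (fun r hr1 hr2 => H r hr1 (Nat.lt_succ_of_lt hr2)))
          (H k hak (Nat.lt_succ_self k))
      · have : a = k + 1 := le_antisymm ham hge
        simp [this]

/-- Antitonicity of the increments of a discretely concave sequence. -/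
private lemma d_antitone_aux (g : ℕ → ℝ) (a b : ℕ)
    (hc : ∀ r, a ≤ r → r + 2 ≤ b → g r + g (r + 2) ≤ 2 * g (r + 1)) :
    ∀ r s, a ≤ r → r ≤ s → s + 1 ≤ b → g (s + 1) - g s ≤ g (r + 1) - g r := by
  intro r s har hrs
  induction s, hrs using Nat.le_induction with
  | base => intro _; exact le_refl _
  | succ s hrs ih =>
      intro hsb
      have h1 : g (s + 1) - g s ≤ g (r + 1) - g r := ih (by omega)
      have h2 : g s + g (s + 2) ≤ 2 * g (s + 1) := hc s (le_trans har hrs) (by omega)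
      have hgoal : g (s + 2) - g (s + 1) ≤ g (s + 1) - g s := by linarith
      linarith

/-- A discretely concave sequence attains its minimum on `[a,b]` at an endpoint. -/
private lemma concave_min_aux (g : ℕ → ℝ) (a b m : ℕ) (ham : a ≤ m) (hmb : m ≤ b)
    (hc : ∀ r, a ≤ r → r + 2 ≤ b → g r + g (r + 2) ≤ 2 * g (r + 1)) :
    g a ≤ g m ∨ g b ≤ g m := by
  by_cases H : ∀ r, a ≤ r → r < m → g r ≤ g (r + 1)
  · exact Or.inl (chain_le_aux g a m ham H)
  · right
    push_neg at H
    obtain ⟨r0, har0, hr0m, hneg⟩ := H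
    have hdec : ∀ r, m ≤ r → r < b → (fun k => -(g k)) r ≤ (fun k => -(g k)) (r + 1) := by
      intro r hmr hrb
      have hd : g (r + 1) - g r ≤ g (r0 + 1) - g r0 :=
        d_antitone_aux g a b hc r0 r har0 (by omega) (by omega)
      simp only
      linarith
    have := chain_le_aux (fun k => -(g k)) m b hmb hdec
    linarith

/-- For every hive `h` on `Δ` and every vertex `x` of `Δ`,
`min_{∂Δ} h ≤ h(x) ≤ n·max_{∂Δ} h`. -/
theorem hive_boundary_bound (n : ℕ) (hn : 1 ≤ n) (h : ℕ → ℕ → ℝ)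
    (hh : IsHiveFn n h) (m i : ℕ) (hi : i ≤ m) (hm : m ≤ n) :
    (∃ p q : ℕ, BdryVtx n p q ∧ h p q ≤ h m i) ∧
    (∃ p q : ℕ, BdryVtx n p q ∧ h m i ≤ (n : ℝ) * h p q) := by
  obtain ⟨h00, h1, h2, h3⟩ := hh
  constructor
  · -- lower bound: concavity along the down-left line through (m,i)
    have hcV : ∀ r, i ≤ r → r + 2 ≤ n → h r i + h (r + 2) i ≤ 2 * h (r + 1) i := by
      intro r hir hrn
      have a1 : h r i + h (r + 2) (i + 1) ≤ h (r + 1) i + h (r + 1) (i + 1) :=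
        h1 r i hir hrn
      have a2 : h (r + 2) i + h (r + 1) (i + 1) ≤ h (r + 1) i + h (r + 2) (i + 1) :=
        h3 (r + 1) i (by omega) (by omega)
      linarith
    rcases concave_min_aux (fun r => h r i) i n m hi hm hcV with hlo | hlo
    · exact ⟨i, i, ⟨le_refl i, le_trans hi hm, Or.inr (Or.inl rfl)⟩, hlo⟩
    · exact ⟨n, i, ⟨le_trans hi hm, le_refl n, Or.inr (Or.inr rfl)⟩, hlo⟩
  · -- upper bound via h(i+k, i) ≤ h(i,i) + h(k,0)
    obtain ⟨k, rfl⟩ : ∃ k, m = i + k := ⟨m - i, by omega⟩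
    -- increments along the dl direction decrease under dr-shifts
    have Dcmp : ∀ j k', j + k' + 1 ≤ n →
        h (j + k' + 1) j - h (j + k') j ≤ h (k' + 1) 0 - h k' 0 := by
      intro j
      induction j with
      | zero => intro k' _; simp
      | succ j ih =>
          intro k' hjk
          have a1 : h (j + k') j + h (j + k' + 2) (j + 1)
              ≤ h (j + k' + 1) j + h (j + k' + 1) (j + 1) :=
            h1 (j + k') j (by omega) (by omega)
          have a2 : h (j + k' + 1) j - h (j + k') j ≤ h (k' + 1) 0 - h k' 0 :=
            ih k' (by omega)
          have e1 : j + 1 + k' + 1 = j + k' + 2 := by omega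
          have e2 : j + 1 + k' = j + k' + 1 := by omega
          rw [e1, e2]
          linarith
    have Tele : ∀ k', i + k' ≤ n → h (i + k') i ≤ h i i + h k' 0 := by
      intro k'
      induction k' with
      | zero => intro _; simp [h00]
      | succ k' ih =>
          intro hkn
          have a1 : h (i + k' + 1) i - h (i + k') i ≤ h (k' + 1) 0 - h k' 0 :=
            Dcmp i k' (by omega)
          have a2 : h (i + k') i ≤ h i i + h k' 0 := ih (by omega)
          have e1 : i + (k' + 1) = i + k' + 1 := by omega
          rw [e1]
          linarith
    have key : h (i + k) i ≤ h i i + h k 0 := Tele k hm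
    by_cases hpos : h (i + k) i ≤ 0
    · refine ⟨0, 0, ⟨le_refl 0, Nat.zero_le n, Or.inl rfl⟩, ?_⟩
      rw [h00, mul_zero]
      exact hpos
    · push_neg at hpos
      have hn1 : (1 : ℝ) ≤ (n : ℝ) := by exact_mod_cast hn
      by_cases hbd : i = 0 ∨ k = 0 ∨ i + k = n
      · -- (i+k, i) is itself a boundary vertex
        refine ⟨i + k, i, ⟨by omega, hm, ?_⟩, ?_⟩
        · rcases hbd with h' | h' | h'
          · exact Or.inl h'
          · exact Or.inr (Or.inl (by omega))
          · exact Or.inr (Or.inr h')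
        · nlinarith
      · -- interior: n ≥ 2, use the larger of h(i,i), h(k,0)
        push_neg at hbd
        have hn2 : (2 : ℝ) ≤ (n : ℝ) := by
          have : 2 ≤ n := by omega
          exact_mod_cast this
        by_cases hcmp : h i i ≤ h k 0
        · have hk0pos : 0 < h k 0 := by linarith
          refine ⟨k, 0, ⟨Nat.zero_le k, by omega, Or.inl rfl⟩, ?_⟩
          nlinarith
        · push_neg at hcmp
          have hiipos : 0 < h i i := by linarith
          refine ⟨i, i, ⟨le_refl i, by omega, Or.inr (Or.inl rfl)⟩, ?_⟩
          nlinarith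

end LRFlows
end

section
/- Let d be a flow class on G and let ρ be a rhombus with σ(ρ,d) ≥ 0. If a negative slack contribution p ∈ Ψ₋(ρ) is contained in supp(d), then its antipodal contribution p′ ∈ Ψ₊(ρ) is contained in supp(d). -/
namespace LRFlows

theorem dnOf?_ne_up (e : EdgeK) (a b : ℕ) : dnOf? e ≠ some (Tri.up a b) := by
  cases e <;> simp only [dnOf?] <;> first | (split <;> simp) | simp

set_option maxHeartbeats 2000000 in
/-- **Antipodal contributions.**  Let `d` be a flow class on `G` and `ρ` a
rhombus with `σ(ρ,d) ≥ 0`.  If a negative slack contribution of `ρ` is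
contained in `supp(d)`, then so is its antipodal (positive) contribution. -/
theorem antipodal_contribution (n : ℕ) (hn : 1 ≤ n) (d : Flow)
    (hd0 : Normalized n d) (hd1 : IsFlow n d)
    (ρ : Rhombus) (hρ : ρ.valid n) (hσ : 0 ≤ slack d ρ) (j : Fin 4)
    (hneg : ContribInSupp n d (negContrib ρ j)) :
    ContribInSupp n d (antipodalContrib ρ j) := by
  obtain ⟨hup, hdn⟩ := hd1
  cases ρ with
  | hzD m i =>
    obtain ⟨him, hmn⟩ := hρ
    have e1 := hup m i him (by omega)
    have e2 := hdn (m+1) i (by omega) (by omega)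
    simp only [slack] at hσ
    fin_cases j <;> simp [ContribInSupp, Contrib.gedges, turnGEdges, negContrib, posContrib,
        antipodalContrib, Rhombus.diag, Rhombus.triU, Rhombus.triD, cwNext, suppEdge,
        upOf, dnOf?, Flow.thru, EdgeK.valid, Tri.valid, dnOf?_ne_up] at hneg ⊢
    · obtain ⟨⟨-, h1⟩, -, h2⟩ := hneg
      and_intros <;> first | omega | linarith
    · obtain ⟨⟨-, h1⟩, -, -, h2⟩ := hneg
      and_intros <;> first | omega | linarith
    · obtain ⟨⟨-, h1⟩, ⟨-, h2⟩, ⟨-, -, h3⟩, -, -, h4⟩ := hneg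
      and_intros <;> first | omega | linarith
    · obtain ⟨⟨-, h1⟩, ⟨-, -, h2⟩, ⟨-, h3⟩, -, h4⟩ := hneg
      and_intros <;> first | omega | linarith
  | dlD m i =>
    obtain ⟨him, hmn⟩ := hρ
    have e1 := hup m (i+1) him (by omega)
    have e2 := hdn m i (by omega) (by omega)
    simp only [slack] at hσ
    fin_cases j <;> simp [ContribInSupp, Contrib.gedges, turnGEdges, negContrib, posContrib,
        antipodalContrib, Rhombus.diag, Rhombus.triU, Rhombus.triD, cwNext, suppEdge,
        upOf, dnOf?, Flow.thru, EdgeK.valid, Tri.valid, dnOf?_ne_up] at hneg ⊢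
    · obtain ⟨⟨-, h1⟩, -, h2⟩ := hneg
      and_intros <;> first | omega | linarith
    · obtain ⟨⟨-, -, h1⟩, -, -, h2⟩ := hneg
      and_intros <;> first | omega | linarith
    · obtain ⟨⟨-, h1⟩, ⟨-, h2⟩, -, -, h3⟩ := hneg
      and_intros <;> first | omega | linarith
    · obtain ⟨⟨-, -, h1⟩, ⟨-, h2⟩, -, h3⟩ := hneg
      and_intros <;> first | omega | linarith
  | drD m i =>
    obtain ⟨him, hmn⟩ := hρ
    have e1 := hup m i (by omega) (by omega)
    have e2 := hdn m i (by omega) (by omega)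
    simp only [slack] at hσ
    fin_cases j <;> simp [ContribInSupp, Contrib.gedges, turnGEdges, negContrib, posContrib,
        antipodalContrib, Rhombus.diag, Rhombus.triU, Rhombus.triD, cwNext, suppEdge,
        upOf, dnOf?, Flow.thru, EdgeK.valid, Tri.valid, dnOf?_ne_up] at hneg ⊢
    · obtain ⟨⟨-, h1⟩, -, h2⟩ := hneg
      and_intros <;> first | omega | linarith
    · obtain ⟨⟨-, -, h1⟩, -, h2⟩ := hneg
      and_intros <;> first | omega | linarith
    · obtain ⟨⟨-, h1⟩, ⟨-, h2⟩, ⟨-, -, h3⟩, -, h4⟩ := hneg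
      and_intros <;> first | omega | linarith
    · obtain ⟨⟨-, -, h1⟩, ⟨-, -, h2⟩, ⟨-, h3⟩, -, h4⟩ := hneg
      and_intros <;> first | omega | linarith

end LRFlows
end
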